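/- arXiv:2409.13784 — 6 statements merged into one kernel-verified Lean document; each statement's English description precedes it below -/
import Mathlib

section
/- For a connected k-regular graph G on n ≥ 5 vertices with k ≥ 1, the graph R(G) := L(L(G)^c)^c is regular of degree d = (1/8)(nk - 8)(nk - 4k + 2) + 1. -/
open SimpleGraph Polynomial

noncomputable instance {V : Type*} [Finite V] {G : SimpleGraph V} {v : V} :
    Fintype (G.neighborSet v) := Fintype.ofFinite _

/-- The operation `R(G) = L(L(G)ᶜ)ᶜ`. -/
def RGraph {V : Type*} (G : SimpleGraph V) :
    SimpleGraph ((G.lineGraph)ᶜ.edgeSet) :=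
  ((G.lineGraph)ᶜ.lineGraph)ᶜ

/-- Adjacency matrix over `ℝ` of a graph on a finite vertex type. -/
noncomputable def adjM {V : Type*} [Fintype V] (G : SimpleGraph V) : Matrix V V ℝ :=
  letI := Classical.decRel G.Adj
  G.adjMatrix ℝ

/-- Characteristic polynomial of the adjacency matrix. -/
noncomputable def cpoly {V : Type*} [Finite V] (G : SimpleGraph V) : Polynomial ℝ :=
  letI := Fintype.ofFinite V
  letI := Classical.decEq V
  (adjM G).charpoly

/-- `μ` is an eigenvalue of the adjacency matrix of `G`. -/
def IsEigval {V : Type*} [Finite V] (G : SimpleGraph V) (μ : ℝ) : Prop :=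
  letI := Fintype.ofFinite V
  ∃ v : V → ℝ, v ≠ 0 ∧ (adjM G).mulVec v = μ • v

/-- `μ` is the second largest (distinct) eigenvalue of `G`. -/
def IsSecondLargestEigval {V : Type*} [Finite V] (G : SimpleGraph V) (μ : ℝ) : Prop :=
  IsEigval G μ ∧ ∃ ν : ℝ, IsEigval G ν ∧ μ < ν ∧
    ∀ ρ : ℝ, IsEigval G ρ → ρ = ν ∨ ρ ≤ μ

/-- `μ` is the smallest eigenvalue of `G`. -/
def IsSmallestEigval {V : Type*} [Finite V] (G : SimpleGraph V) (μ : ℝ) : Prop :=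
  IsEigval G μ ∧ ∀ ρ : ℝ, IsEigval G ρ → μ ≤ ρ

/-- `H` is a Ramanujan graph of degree `d`. -/
def IsRamanujan {V : Type*} [Finite V] (H : SimpleGraph V) (d : ℕ) : Prop :=
  H.Connected ∧ H.IsRegularOfDegree d ∧
    ∀ μ : ℝ, IsEigval H μ → |μ| ≠ (d : ℝ) → |μ| ≤ 2 * Real.sqrt (d - 1)


lemma degree_eq_ncard {V : Type*} {G : SimpleGraph V} {v : V} [Fintype (G.neighborSet v)] :
    G.degree v = (G.neighborSet v).ncard := by
  rw [← SimpleGraph.card_neighborSet_eq_degree, ← Set.toFinset_card, ← Set.ncard_eq_toFinset_card']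

lemma lineGraph_neighborSet_image {V : Type*} {G : SimpleGraph V}
    (e : G.edgeSet) {a b : V} (hab : (e : Sym2 V) = s(a, b)) :
    Subtype.val '' ((G.lineGraph).neighborSet e)
      = (G.incidenceSet a ∪ G.incidenceSet b) \ {(e : Sym2 V)} := by
  ext f
  constructor
  · rintro ⟨⟨f, hf⟩, hadj, rfl⟩
    obtain ⟨hne, v, hv1, hv2⟩ := (lineGraph_adj_iff_exists).1 hadj
    refine ⟨?_, ?_⟩
    · rw [hab] at hv1
      rcases Sym2.mem_iff.1 hv1 with rfl | rfl
      · exact Or.inl ⟨hf, hv2⟩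
      · exact Or.inr ⟨hf, hv2⟩
    · simp only [Set.mem_singleton_iff]
      intro h
      apply hne
      apply Subtype.ext
      exact h.symm
  · rintro ⟨hmem, hne⟩
    have hf : f ∈ G.edgeSet := by rcases hmem with h | h <;> exact h.1
    refine ⟨⟨f, hf⟩, ?_, rfl⟩
    rw [SimpleGraph.mem_neighborSet, lineGraph_adj_iff_exists]
    refine ⟨fun h => hne (by rw [h]; exact rfl), ?_⟩
    rcases hmem with ⟨_, ha⟩ | ⟨_, hb⟩
    · exact ⟨a, by rw [hab]; exact Sym2.mem_mk_left a b, ha⟩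
    · exact ⟨b, by rw [hab]; exact Sym2.mem_mk_right a b, hb⟩

lemma lineGraph_ncard_neighborSet {V : Type*} [Finite V] {G : SimpleGraph V}
    (e : G.edgeSet) {a b : V} (hab : (e : Sym2 V) = s(a, b)) :
    ((G.lineGraph).neighborSet e).ncard + 2
      = (G.neighborSet a).ncard + (G.neighborSet b).ncard := by
  classical
  have hadj : G.Adj a b := by have h := e.2; rwa [hab, SimpleGraph.mem_edgeSet] at h
  have h1 : ((G.lineGraph).neighborSet e).ncard
      = ((G.incidenceSet a ∪ G.incidenceSet b) \ {(e : Sym2 V)}).ncard := by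
    rw [← lineGraph_neighborSet_image e hab,
      Set.ncard_image_of_injective _ Subtype.val_injective]
  have hmem : (e : Sym2 V) ∈ G.incidenceSet a ∪ G.incidenceSet b :=
    Or.inl ⟨e.2, by rw [hab]; exact Sym2.mem_mk_left a b⟩
  have h2 := Set.ncard_diff_singleton_add_one hmem (Set.toFinite _)
  have h3 := Set.ncard_union_add_ncard_inter (G.incidenceSet a) (G.incidenceSet b)
    (Set.toFinite _) (Set.toFinite _)
  rw [G.incidenceSet_inter_incidenceSet_of_adj hadj, Set.ncard_singleton] at h3
  have h5 : (G.incidenceSet a).ncard = (G.neighborSet a).ncard := by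
    rw [← Nat.card_coe_set_eq, ← Nat.card_coe_set_eq]
    exact Nat.card_congr (G.incidenceSetEquivNeighborSet a)
  have h6 : (G.incidenceSet b).ncard = (G.neighborSet b).ncard := by
    rw [← Nat.card_coe_set_eq, ← Nat.card_coe_set_eq]
    exact Nat.card_congr (G.incidenceSetEquivNeighborSet b)
  omega

lemma lineGraph_regular {V : Type*} [Finite V] {G : SimpleGraph V} {k : ℕ}
    (h : ∀ v, (G.neighborSet v).ncard = k) (e : G.edgeSet) :
    ((G.lineGraph).neighborSet e).ncard + 2 = 2 * k := by
  obtain ⟨a, b, hab⟩ : ∃ a b, (e : Sym2 V) = s(a, b) :=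
    Sym2.inductionOn (f := fun z => ∃ a b, z = s(a, b)) (e : Sym2 V)
      (fun x y => ⟨x, y, rfl⟩)
  rw [lineGraph_ncard_neighborSet e hab, h a, h b]
  ring

lemma compl_ncard_neighborSet {V : Type*} [Finite V] (G : SimpleGraph V) (v : V) :
    (Gᶜ.neighborSet v).ncard + (G.neighborSet v).ncard + 1 = Nat.card V := by
  rw [G.neighborSet_compl v]
  have hv : v ∈ (G.neighborSet v)ᶜ := by simp
  have h1 := Set.ncard_diff_singleton_add_one hv (Set.toFinite _)
  have h2 := Set.ncard_add_ncard_compl (G.neighborSet v) (Set.toFinite _) (Set.toFinite _)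
  omega

lemma twice_ncard_edgeSet {V : Type*} [Finite V] (G : SimpleGraph V) {k : ℕ}
    (h : ∀ v, (G.neighborSet v).ncard = k) :
    2 * G.edgeSet.ncard = Nat.card V * k := by
  letI := Fintype.ofFinite V
  classical
  have h2 := G.sum_degrees_eq_twice_card_edges
  simp only [degree_eq_ncard, h, Finset.sum_const, smul_eq_mul, Finset.card_univ] at h2
  rw [SimpleGraph.edgeFinset, ← Set.ncard_eq_toFinset_card'] at h2
  rw [Nat.card_eq_fintype_card, ← h2]

theorem stmt5 {V : Type*} [Fintype V] (G : SimpleGraph V) (k : ℕ)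
    (hn : 5 ≤ Fintype.card V) (hk : 1 ≤ k) (hconn : G.Connected)
    (hreg : G.IsRegularOfDegree k) :
    ∃ d : ℕ,
      8 * (d : ℤ) =
        ((Fintype.card V : ℤ) * k - 8) * ((Fintype.card V : ℤ) * k - 4 * k + 2) + 8 ∧
      (RGraph G).IsRegularOfDegree d := by
  classical
  set n := Fintype.card V with hn_def
  have hreg' : ∀ v, (G.neighborSet v).ncard = k := fun v => degree_eq_ncard.symm.trans (hreg v)
  set m := G.edgeSet.ncard with hm_def
  have hm2 : 2 * m = n * k := by
    have h := twice_ncard_edgeSet G hreg'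
    rwa [Nat.card_eq_fintype_card] at h
  have h5k : 5 * k ≤ n * k := Nat.mul_le_mul_right k hn
  have hm3 : 3 ≤ m := by omega
  have hmk : 2 * k ≤ m := by omega
  set H := (G.lineGraph)ᶜ with hH_def
  have hL : ∀ e : G.edgeSet, ((G.lineGraph).neighborSet e).ncard + 2 = 2 * k :=
    lineGraph_regular hreg'
  set r := m - 2 * k + 1 with hr_def
  have hLc : ∀ e : G.edgeSet, (H.neighborSet e).ncard = r := by
    intro e
    have h1 := compl_ncard_neighborSet (G.lineGraph) e
    rw [Nat.card_coe_set_eq, ← hH_def] at h1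
    have h2 := hL e
    omega
  set M := H.edgeSet.ncard with hM_def
  have hM : 2 * M = m * r := by
    have h := twice_ncard_edgeSet H hLc
    rwa [Nat.card_coe_set_eq] at h
  have hL2 : ∀ e : H.edgeSet, ((H.lineGraph).neighborSet e).ncard + 2 = 2 * r :=
    lineGraph_regular hLc
  have h_ineq : 2 * r ≤ M + 1 := by
    rcases le_or_gt 4 m with h4 | h4
    · have : 4 * r ≤ m * r := Nat.mul_le_mul_right r h4
      omega
    · have hm3' : m = 3 := by omega
      have h6 : 2 * M = 3 * r := by rw [hM, hm3']
      omega
  refine ⟨M + 1 - 2 * r, ?_, ?_⟩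
  · have hm2' : 2 * (m : ℤ) = (n : ℤ) * k := by exact_mod_cast hm2
    have hM' : 2 * (M : ℤ) = (m : ℤ) * r := by exact_mod_cast hM
    have hr' : (r : ℤ) = (m : ℤ) - 2 * k + 1 := by omega
    have hd' : ((M + 1 - 2 * r : ℕ) : ℤ) = (M : ℤ) + 1 - 2 * r := by omega
    have hnk : (n : ℤ) * k = 2 * m := by linarith
    rw [hnk]
    linear_combination 8 * hd' + 4 * hM' + (4 * (m : ℤ) - 16) * hr'
  · intro e
    rw [degree_eq_ncard]
    have h1 := compl_ncard_neighborSet (H.lineGraph) e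
    rw [Nat.card_coe_set_eq] at h1
    have h2 := hL2 e
    have h3 : ((RGraph G).neighborSet e).ncard = (((H.lineGraph)ᶜ).neighborSet e).ncard := rfl
    rw [h3]
    omega
end

section
/- If G is a connected k-regular graph on n ≥ 5 vertices with k ≥ 2, then R(G) := L(L(G)^c)^c is connected. -/
open SimpleGraph Polynomial

/-!
`R(G)` is the complement of the line graph of `H = L(G)ᶜ`, whose vertices are the pairs of
disjoint edges of `G`; two such pairs are adjacent in `R(G)` when they share no edge. So it
suffices that two pairs `{e, f}` and `{e, h}` sharing an edge have a common neighbour `{a, b}`.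
Writing `e = uv`, take `a = uw` for a second neighbour `w` of `u`. Since `2m = nk`, a count
leaves at least `m + 1 - 2k ≥ 2` edges missing `u` and `w`, and at least `3` when `n ≥ 6`, so
one of them, `b`, differs from `f` and `h`.
-/

open Finset

lemma Finset.three_le_card_of_mem_sym2 {α : Type*} {S : Finset α} {f h : Sym2 α}
    (hf : ¬f.IsDiag) (hh : ¬h.IsDiag) (hfh : f ≠ h) (hfS : f ∈ S.sym2) (hhS : h ∈ S.sym2) :
    3 ≤ #S := by
  classical
  by_contra! hS
  induction f using Sym2.ind with | _ x y =>
  induction h using Sym2.ind with | _ p q =>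
  simp only [mk_mem_sym2_iff, Sym2.mk_isDiag_iff] at hf hh hfS hhS
  have hSxy : S = {x, y} := (eq_of_subset_of_card_le
    (insert_subset hfS.1 (singleton_subset_iff.2 hfS.2))
    (by rw [card_pair hf]; omega)).symm
  simp only [hSxy, mem_insert, mem_singleton] at hhS
  rcases hhS with ⟨rfl | rfl, rfl | rfl⟩ <;> simp_all [Sym2.eq_swap]

namespace SimpleGraph

variable {V : Type*} {G : SimpleGraph V}

lemma compl_lineGraph_adj {e f : G.edgeSet} :
    G.lineGraphᶜ.Adj e f ↔ e ≠ f ∧ ∀ x ∈ (e : Sym2 V), x ∉ (f : Sym2 V) := by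
  rw [compl_adj, lineGraph_adj_iff_exists]
  grind

lemma compl_lineGraph_adj_of_forall_notMem {e f : G.edgeSet} {x y : V}
    (he : (e : Sym2 V) = s(x, y)) (hx : x ∉ (f : Sym2 V)) (hy : y ∉ (f : Sym2 V)) :
    G.lineGraphᶜ.Adj e f := by
  refine compl_lineGraph_adj.2 ⟨fun hef => hx ?_, fun z hz => ?_⟩
  · simp [← hef, he]
  · rw [he, Sym2.mem_iff] at hz
    rcases hz with rfl | rfl <;> assumption

lemma preconnected_compl_lineGraph
    (h : ∀ x y z, G.Adj x y → G.Adj x z → y ≠ z → ∃ r ∈ G.edgeSet, x ∉ r ∧ y ∉ r ∧ z ∉ r) :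
    G.lineGraphᶜ.Preconnected := by
  intro e f
  by_cases hef : e = f
  · rw [hef]
  by_cases hshare : ∃ x ∈ (e : Sym2 V), x ∈ (f : Sym2 V)
  swap
  · exact (compl_lineGraph_adj.2 ⟨hef, fun x hxe hxf => hshare ⟨x, hxe, hxf⟩⟩).reachable
  obtain ⟨x, hxe, hxf⟩ := hshare
  have he := Sym2.other_spec hxe
  have hf := Sym2.other_spec hxf
  have hyz : Sym2.Mem.other hxe ≠ Sym2.Mem.other hxf := fun hyz =>
    hef (Subtype.ext (by rw [← he, ← hf, hyz]))
  obtain ⟨r, hr, hxr, hyr, hzr⟩ := h x _ _ (by rw [← mem_edgeSet, he]; exact e.2)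
    (by rw [← mem_edgeSet, hf]; exact f.2) hyz
  let r' : G.edgeSet := ⟨r, hr⟩
  have her : G.lineGraphᶜ.Adj e r' := compl_lineGraph_adj_of_forall_notMem he.symm hxr hyr
  have hfr : G.lineGraphᶜ.Adj f r' := compl_lineGraph_adj_of_forall_notMem hf.symm hxr hzr
  exact her.reachable.trans hfr.symm.reachable

section Regular

variable [Fintype V] [G.LocallyFinite] {k : ℕ}

lemma IsRegularOfDegree.two_mul_card_edgeFinset [DecidableRel G.Adj]
    (hreg : G.IsRegularOfDegree k) : 2 * #G.edgeFinset = Fintype.card V * k := by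
  rw [← sum_degrees_eq_twice_card_edges, Finset.sum_congr rfl fun v _ => by convert hreg v,
    sum_const, card_univ, smul_eq_mul]

lemma IsRegularOfDegree.card_edgeFinset_le [DecidableEq V] [DecidableRel G.Adj]
    (hreg : G.IsRegularOfDegree k) {u w : V} (huw : G.Adj u w) :
    #G.edgeFinset + 1 ≤ #{b ∈ G.edgeFinset | u ∉ b ∧ w ∉ b} + 2 * k := by
  have hinc (v : V) : #(G.incidenceFinset v) = k := by
    rw [card_incidenceFinset_eq_degree]; convert hreg v
  have hcover : G.edgeFinset ⊆
      {b ∈ G.edgeFinset | u ∉ b ∧ w ∉ b} ∪ (G.incidenceFinset u ∪ G.incidenceFinset w) := by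
    intro b hb
    simp only [mem_union, mem_filter, mem_incidenceFinset, incidenceSet, Set.mem_ofPred_eq,
      ← mem_edgeFinset]
    tauto
  have hshared : s(u, w) ∈ G.incidenceFinset u ∩ G.incidenceFinset w := by
    simp [huw, incidenceSet]
  have hunion := card_union_add_card_inter (G.incidenceFinset u) (G.incidenceFinset w)
  rw [hinc, hinc] at hunion
  have hcover_card := (card_le_card hcover).trans (card_union_le _ _)
  have hshared_card := card_pos.2 ⟨_, hshared⟩
  omega

lemma IsRegularOfDegree.exists_edge_disjoint_of_adj (hn : 5 ≤ Fintype.card V)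
    (hreg : G.IsRegularOfDegree k) {u w : V} (huw : G.Adj u w) :
    ∃ b ∈ G.edgeSet, u ∉ b ∧ w ∉ b := by
  classical
  have h2m := hreg.two_mul_card_edgeFinset
  have hcount := hreg.card_edgeFinset_le huw
  have hnk := Nat.mul_le_mul_right k hn
  obtain ⟨b, hb⟩ := card_pos.1 (show 0 < #{b ∈ G.edgeFinset | u ∉ b ∧ w ∉ b} by omega)
  rw [mem_filter, mem_edgeFinset] at hb
  exact ⟨b, hb.1, hb.2⟩

/-- When `n = 5` the count alone leaves room for only two such edges `b`, and they cannot be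
`f` and `h`: those would be two distinct edges on the two vertices outside `{u, v, w}`. -/
lemma IsRegularOfDegree.exists_edge_avoiding (hn : 5 ≤ Fintype.card V) (hk : 2 ≤ k)
    (hreg : G.IsRegularOfDegree k) {u v w : V} (huv : G.Adj u v) (huw : G.Adj u w) (hvw : v ≠ w)
    {f h : Sym2 V} (hfh : f ≠ h) (hvf : v ∉ f) (hvh : v ∉ h) :
    ∃ b ∈ G.edgeSet, u ∉ b ∧ w ∉ b ∧ b ≠ f ∧ b ≠ h := by
  classical
  set T := {b ∈ G.edgeFinset | u ∉ b ∧ w ∉ b} with hTdef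
  by_contra! hT
  have hTfh : T ⊆ {f, h} := fun b hb => by
    rw [hTdef, mem_filter, mem_edgeFinset] at hb
    have := hT b hb.1 hb.2.1 hb.2.2
    grind
  have hTle := card_le_card hTfh
  have hfh2 : #({f, h} : Finset (Sym2 V)) = 2 := card_pair hfh
  have h2m := hreg.two_mul_card_edgeFinset
  have hcount : #G.edgeFinset + 1 ≤ #T + 2 * k := by convert hreg.card_edgeFinset_le huw
  rcases hn.eq_or_lt with hn5 | hn6
  swap
  · have hnk := Nat.mul_le_mul_right k hn6
    omega
  rw [← hn5] at h2m
  have hTeq : T = {f, h} := eq_of_subset_of_card_le hTfh (by omega)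
  have hfT : f ∈ T := hTeq ▸ mem_insert_self f {h}
  have hhT : h ∈ T := hTeq ▸ mem_insert_of_mem (mem_singleton_self h)
  rw [hTdef, mem_filter, mem_edgeFinset] at hfT hhT
  have hrest : #(univ \ {u, v, w}) = 2 := by
    rw [card_sdiff_of_subset (subset_univ _), card_univ, ← hn5,
      card_insert_of_notMem (by simp [huv.ne, huw.ne]), card_pair hvw]
  have houtside {e : Sym2 V} (he : u ∉ e ∧ w ∉ e) (hev : v ∉ e) : e ∈ (univ \ {u, v, w}).sym2 :=
    mem_sym2_iff.2 fun x hx => by grind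
  have := three_le_card_of_mem_sym2 (G.not_isDiag_of_mem_edgeSet hfT.1)
    (G.not_isDiag_of_mem_edgeSet hhT.1) hfh (houtside hfT.2 hvf) (houtside hhT.2 hvh)
  omega

lemma IsRegularOfDegree.nonempty_edgeSet_compl_lineGraph (hn : 5 ≤ Fintype.card V)
    (hk : 0 < k) (hreg : G.IsRegularOfDegree k) : G.lineGraphᶜ.edgeSet.Nonempty := by
  obtain ⟨u⟩ : Nonempty V := Fintype.card_pos_iff.1 (by omega)
  obtain ⟨w, hw⟩ : (G.neighborFinset u).Nonempty := by
    rw [← card_pos, card_neighborFinset_eq_degree, hreg.degree_eq]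
    omega
  rw [mem_neighborFinset] at hw
  obtain ⟨b, hb, hub, hwb⟩ := hreg.exists_edge_disjoint_of_adj hn hw
  exact ⟨s(⟨s(u, w), hw⟩, ⟨b, hb⟩), compl_lineGraph_adj_of_forall_notMem rfl hub hwb⟩

lemma IsRegularOfDegree.exists_edge_compl_lineGraph_avoiding (hn : 5 ≤ Fintype.card V)
    (hk : 2 ≤ k) (hreg : G.IsRegularOfDegree k) {x y z : G.edgeSet}
    (hxy : G.lineGraphᶜ.Adj x y) (hxz : G.lineGraphᶜ.Adj x z) (hyz : y ≠ z) :
    ∃ r ∈ G.lineGraphᶜ.edgeSet, x ∉ r ∧ y ∉ r ∧ z ∉ r := by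
  obtain ⟨e, he⟩ := x
  induction e using Sym2.ind with | _ u v =>
  have huv : G.Adj u v := he
  obtain ⟨w, hw, hwv⟩ := exists_mem_ne
    (by rw [card_neighborFinset_eq_degree, hreg.degree_eq]; omega : 1 < #(G.neighborFinset u)) v
  rw [mem_neighborFinset] at hw
  have hyu := (compl_lineGraph_adj.1 hxy).2 u (Sym2.mem_mk_left u v)
  have hyv := (compl_lineGraph_adj.1 hxy).2 v (Sym2.mem_mk_right u v)
  have hzu := (compl_lineGraph_adj.1 hxz).2 u (Sym2.mem_mk_left u v)
  have hzv := (compl_lineGraph_adj.1 hxz).2 v (Sym2.mem_mk_right u v)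
  obtain ⟨b, hb, hub, hwb, hby, hbz⟩ := hreg.exists_edge_avoiding hn hk huv hw hwv.symm
    (Subtype.val_injective.ne hyz) hyv hzv
  refine ⟨s(⟨s(u, w), hw⟩, ⟨b, hb⟩), compl_lineGraph_adj_of_forall_notMem rfl hub hwb,
    ?_, ?_, ?_⟩ <;> simp only [Sym2.mem_iff, not_or, Subtype.ext_iff]
  · exact ⟨fun h => hwv (Sym2.congr_right.1 h).symm, fun h => hub (h ▸ Sym2.mem_mk_left u v)⟩
  · exact ⟨fun h => hyu (h ▸ Sym2.mem_mk_left u w), hby.symm⟩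
  · exact ⟨fun h => hzu (h ▸ Sym2.mem_mk_left u w), hbz.symm⟩

end Regular

end SimpleGraph

theorem stmt12_general {V : Type*} [Fintype V] (G : SimpleGraph V) (k : ℕ)
    (hn : 5 ≤ Fintype.card V) (hk : 2 ≤ k)
    (hreg : G.IsRegularOfDegree k) :
    (RGraph G).Connected := by
  have := (hreg.nonempty_edgeSet_compl_lineGraph hn (by omega)).to_subtype
  exact ⟨preconnected_compl_lineGraph fun _ _ _ hxy hxz hyz =>
    hreg.exists_edge_compl_lineGraph_avoiding hn hk hxy hxz hyz⟩

theorem stmt12 {V : Type*} [Fintype V] (G : SimpleGraph V) (k : ℕ)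
    (hn : 5 ≤ Fintype.card V) (hk : 2 ≤ k) (hconn : G.Connected)
    (hreg : G.IsRegularOfDegree k) :
    (RGraph G).Connected :=
  stmt12_general G k hn hk hreg
end

section
/- If G is a connected k-regular graph on n ≥ 5 vertices with k ≥ 2, then the diameter of R(G) := L(L(G)^c)^c is at most 3. -/
open SimpleGraph Polynomial

section MyAux
variable {V : Type*} [Fintype V]
set_option linter.unusedSectionVars false
set_option linter.unusedVariables false






private lemma sym2_rep (z : Sym2 V) : ∃ x y, s(x, y) = z := by
  induction z using Sym2.ind with
  | _ x y => exact ⟨x, y, rfl⟩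

private lemma inc_two [DecidableEq V] {G : SimpleGraph V} {u : V} (hdeg : G.degree u = 2)
    {a b : Sym2 V} (ha : a ∈ G.edgeSet) (hb : b ∈ G.edgeSet) (hab : a ≠ b)
    (hua : u ∈ a) (hub : u ∈ b) {z : Sym2 V} (hz : z ∈ G.edgeSet) (huz : u ∈ z) :
    z = a ∨ z = b := by
  classical
  have hsub : ({a, b} : Finset (Sym2 V)) ⊆ G.incidenceFinset u := by
    intro t ht
    rw [SimpleGraph.mem_incidenceFinset]
    rcases Finset.mem_insert.mp ht with h | h
    · subst h; exact ⟨ha, hua⟩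
    · rw [Finset.mem_singleton] at h; subst h; exact ⟨hb, hub⟩
  have hcard : ({a, b} : Finset (Sym2 V)).card = 2 := by
    rw [Finset.card_insert_of_notMem (by simp [hab]), Finset.card_singleton]
  have heq : ({a, b} : Finset (Sym2 V)) = G.incidenceFinset u := by
    apply Finset.eq_of_subset_of_card_le hsub
    rw [SimpleGraph.card_incidenceFinset_eq_degree, hdeg, hcard]
  have hmem : z ∈ ({a, b} : Finset (Sym2 V)) := by
    rw [heq, SimpleGraph.mem_incidenceFinset]; exact ⟨hz, huz⟩
  simpa using hmem

private lemma degree_eq_of_regular {G : SimpleGraph V} {k : ℕ}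
    (hreg : G.IsRegularOfDegree k) (v : V) {inst : Fintype (G.neighborSet v)} :
    @SimpleGraph.degree V G v inst = k := by
  rw [← hreg v]
  congr!

private lemma key {G : SimpleGraph V} {k : ℕ} (hn : 5 ≤ Fintype.card V) (hk : 2 ≤ k)
    (hreg : G.IsRegularOfDegree k) {e f g : Sym2 V}
    (he : e ∈ G.edgeSet) (hf : f ∈ G.edgeSet) (hg : g ∈ G.edgeSet)
    (hef : ∀ v, v ∈ e → v ∉ f) (heg : ∀ v, v ∈ e → v ∉ g) (hfg : f ≠ g) :
    ∃ a b, a ∈ G.edgeSet ∧ b ∈ G.edgeSet ∧ (∀ v, v ∈ a → v ∉ b) ∧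
      a ≠ e ∧ a ≠ f ∧ a ≠ g ∧ b ≠ e ∧ b ≠ f ∧ b ≠ g := by
  classical
  by_contra hcon
  push_neg at hcon
  -- basic data
  obtain ⟨x1, x2, rfl⟩ := sym2_rep e
  obtain ⟨y1, y2, rfl⟩ := sym2_rep f
  have hx : G.Adj x1 x2 := he
  have hy : G.Adj y1 y2 := hf
  have hx1e : x1 ∈ s(x1, x2) := Sym2.mem_mk_left _ _
  have hx2e : x2 ∈ s(x1, x2) := Sym2.mem_mk_right _ _
  have hef' : s(x1, x2) ≠ s(y1, y2) := fun h => hef x1 hx1e (h ▸ hx1e)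
  have heg' : s(x1, x2) ≠ g := fun h => heg x1 hx1e (h ▸ hx1e)
  set S : Finset (Sym2 V) := G.edgeFinset \ {s(x1, x2), s(y1, y2), g} with hSdef
  have hmemS : ∀ {z : Sym2 V}, z ∈ S →
      z ∈ G.edgeSet ∧ z ≠ s(x1, x2) ∧ z ≠ s(y1, y2) ∧ z ≠ g := by
    intro z hz
    have := Finset.mem_sdiff.mp hz
    have h2 := this.2
    simp only [Finset.mem_insert, Finset.mem_singleton] at h2
    push_neg at h2
    exact ⟨SimpleGraph.mem_edgeFinset.mp this.1, h2.1, h2.2.1, h2.2.2⟩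
  have hS : ∀ a ∈ S, ∀ b ∈ S, ∃ v, v ∈ a ∧ v ∈ b := by
    intro a ha b hb
    by_contra hv
    push_neg at hv
    obtain ⟨haE, ha1, ha2, ha3⟩ := hmemS ha
    obtain ⟨hbE, hb1, hb2, hb3⟩ := hmemS hb
    exact hb3 (hcon a b haE hbE hv ha1 ha2 ha3 hb1 hb2)
  -- counting
  have h2m : Fintype.card V * k = 2 * G.edgeFinset.card := by
    have h := G.sum_degrees_eq_twice_card_edges
    simp only [degree_eq_of_regular hreg, Finset.sum_const, Finset.card_univ,
      smul_eq_mul] at h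
    exact h
  have h5k : 5 * k ≤ 2 * G.edgeFinset.card := h2m ▸ Nat.mul_le_mul_right k hn
  have hm5 : 5 ≤ G.edgeFinset.card := by omega
  have hsubefg : ({s(x1, x2), s(y1, y2), g} : Finset (Sym2 V)) ⊆ G.edgeFinset := by
    intro t ht
    simp only [Finset.mem_insert, Finset.mem_singleton] at ht
    rcases ht with rfl | rfl | rfl <;> exact SimpleGraph.mem_edgeFinset.mpr (by assumption)
  have hcard3 : ({s(x1, x2), s(y1, y2), g} : Finset (Sym2 V)).card = 3 := by
    rw [Finset.card_insert_of_notMem (by simp [hef', heg']),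
      Finset.card_insert_of_notMem (by simp [hfg]), Finset.card_singleton]
  have hScard : S.card + 3 = G.edgeFinset.card := by
    rw [hSdef, Finset.card_sdiff_of_subset hsubefg, hcard3]
    have := Finset.card_le_card hsubefg
    omega
  -- pick two intersecting edges in S
  obtain ⟨a, haS, b, hbS, hab⟩ := Finset.one_lt_card.mp (show 1 < S.card by omega)
  obtain ⟨haE, hae, haf, hag⟩ := hmemS haS
  obtain ⟨hbE, hbe, hbf, hbg⟩ := hmemS hbS
  obtain ⟨u, hua, hub⟩ := hS a haS b hbS
  set p := Sym2.Mem.other hua with hpdef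
  have hap : s(u, p) = a := Sym2.other_spec hua
  set q := Sym2.Mem.other hub with hqdef
  have hbq : s(u, q) = b := Sym2.other_spec hub
  have hup : G.Adj u p := by rw [← hap] at haE; exact haE
  have huq : G.Adj u q := by rw [← hbq] at hbE; exact hbE
  have hpq : p ≠ q := fun h => hab (by rw [← hap, ← hbq, h])
  by_cases hall : ∀ c ∈ S, u ∈ c
  · -- Case 1: all edges of S pass through u
    have hSsub : S ⊆ G.incidenceFinset u := by
      intro c hc
      rw [SimpleGraph.mem_incidenceFinset]
      exact ⟨(hmemS hc).1, hall c hc⟩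
    have hSk : S.card ≤ k := by
      have := Finset.card_le_card hSsub
      rwa [SimpleGraph.card_incidenceFinset_eq_degree, degree_eq_of_regular hreg] at this
    have hk2 : k = 2 := by omega
    subst hk2
    have hnum : Fintype.card V = 5 ∧ G.edgeFinset.card = 5 ∧ S.card = 2 := by
      have : Fintype.card V * 2 = 2 * G.edgeFinset.card := h2m
      omega
    -- u not in e, f, g
    have hkey : ∀ z : Sym2 V, z ∈ G.edgeSet → u ∈ z → z = a ∨ z = b := fun z hz huz =>
      inc_two (degree_eq_of_regular hreg u) haE hbE hab hua hub hz huz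
    have hue : u ∉ s(x1, x2) := fun h => by
      rcases hkey _ he h with rfl | rfl
      exacts [hae rfl, hbe rfl]
    have huf : u ∉ s(y1, y2) := fun h => by
      rcases hkey _ hf h with rfl | rfl
      exacts [haf rfl, hbf rfl]
    have hug : u ∉ g := fun h => by
      rcases hkey _ hg h with rfl | rfl
      exacts [hag rfl, hbg rfl]
    simp only [Sym2.mem_iff, not_or] at hue huf
    have hx12 : x1 ≠ x2 := hx.ne
    have hy12 : y1 ≠ y2 := hy.ne
    have hx1y1 : x1 ≠ y1 := fun h => hef x1 hx1e (h ▸ Sym2.mem_mk_left _ _)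
    have hx1y2 : x1 ≠ y2 := fun h => hef x1 hx1e (h ▸ Sym2.mem_mk_right _ _)
    have hx2y1 : x2 ≠ y1 := fun h => hef x2 hx2e (h ▸ Sym2.mem_mk_left _ _)
    have hx2y2 : x2 ≠ y2 := fun h => hef x2 hx2e (h ▸ Sym2.mem_mk_right _ _)
    have hT : ({u, x1, x2, y1, y2} : Finset V).card = 5 := by
      rw [Finset.card_insert_of_notMem (by simp [hue.1, hue.2, huf.1, huf.2]),
        Finset.card_insert_of_notMem (by simp [hx12, hx1y1, hx1y2]),
        Finset.card_insert_of_notMem (by simp [hx2y1, hx2y2]),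
        Finset.card_insert_of_notMem (by simp [hy12]), Finset.card_singleton]
    have huniv : ({u, x1, x2, y1, y2} : Finset V) = Finset.univ :=
      Finset.eq_univ_of_card _ (hT.trans hnum.1.symm)
    obtain ⟨z1, z2, rfl⟩ := sym2_rep g
    have hz : G.Adj z1 z2 := hg
    have hz1g : z1 ∈ s(z1, z2) := Sym2.mem_mk_left _ _
    have hz2g : z2 ∈ s(z1, z2) := Sym2.mem_mk_right _ _
    simp only [Sym2.mem_iff, not_or] at hug
    have hmem1 : z1 ∈ ({u, x1, x2, y1, y2} : Finset V) := huniv ▸ Finset.mem_univ z1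
    have hmem2 : z2 ∈ ({u, x1, x2, y1, y2} : Finset V) := huniv ▸ Finset.mem_univ z2
    simp only [Finset.mem_insert, Finset.mem_singleton] at hmem1 hmem2
    have hz1 : z1 = y1 ∨ z1 = y2 := by
      rcases hmem1 with rfl | rfl | rfl | rfl | rfl
      · exact absurd rfl hug.1
      · exact absurd (heg z1 hx1e hz1g) (fun h => h)
      · exact absurd (heg z1 hx2e hz1g) (fun h => h)
      · exact Or.inl rfl
      · exact Or.inr rfl
    have hz2 : z2 = y1 ∨ z2 = y2 := by
      rcases hmem2 with rfl | rfl | rfl | rfl | rfl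
      · exact absurd rfl hug.2
      · exact absurd (heg z2 hx1e hz2g) (fun h => h)
      · exact absurd (heg z2 hx2e hz2g) (fun h => h)
      · exact Or.inl rfl
      · exact Or.inr rfl
    apply hfg
    rcases hz1 with rfl | rfl <;> rcases hz2 with rfl | rfl
    · exact absurd rfl hz.ne
    · rfl
    · exact Sym2.eq_swap
    · exact absurd rfl hz.ne
  · -- Case 2: triangle
    push_neg at hall
    obtain ⟨c, hcS, huc⟩ := hall
    obtain ⟨hcE, hce, hcf, hcg⟩ := hmemS hcS
    have hpc : p ∈ c := by
      obtain ⟨w, hwa, hwc⟩ := hS a haS c hcS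
      rw [← hap, Sym2.mem_iff] at hwa
      rcases hwa with rfl | rfl
      · exact absurd hwc huc
      · exact hwc
    have hqc : q ∈ c := by
      obtain ⟨w, hwb, hwc⟩ := hS b hbS c hcS
      rw [← hbq, Sym2.mem_iff] at hwb
      rcases hwb with rfl | rfl
      · exact absurd hwc huc
      · exact hwc
    have hc : c = s(p, q) := (Sym2.mem_and_mem_iff hpq).mp ⟨hpc, hqc⟩
    have hsub3 : S ⊆ {a, b, c} := by
      intro d hd
      simp only [Finset.mem_insert, Finset.mem_singleton]
      by_cases hud : u ∈ d
      · obtain ⟨w, hwd, hwc⟩ := hS d hd c hcS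
        rw [hc, Sym2.mem_iff] at hwc
        rcases hwc with rfl | rfl
        · exact Or.inl (((Sym2.mem_and_mem_iff hup.ne).mp ⟨hud, hwd⟩).trans hap)
        · exact Or.inr (Or.inl (((Sym2.mem_and_mem_iff huq.ne).mp ⟨hud, hwd⟩).trans hbq))
      · have hpd : p ∈ d := by
          obtain ⟨w, hwd, hwa⟩ := hS d hd a haS
          rw [← hap, Sym2.mem_iff] at hwa
          rcases hwa with rfl | rfl
          · exact absurd hwd hud
          · exact hwd
        have hqd : q ∈ d := by
          obtain ⟨w, hwd, hwb⟩ := hS d hd b hbS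
          rw [← hbq, Sym2.mem_iff] at hwb
          rcases hwb with rfl | rfl
          · exact absurd hwd hud
          · exact hwd
        exact Or.inr (Or.inr (((Sym2.mem_and_mem_iff hpq).mp ⟨hpd, hqd⟩).trans hc.symm))
    have hS3 : S.card ≤ 3 := by
      refine (Finset.card_le_card hsub3).trans ?_
      have h1 := Finset.card_insert_le a ({b, c} : Finset (Sym2 V))
      have h2 := Finset.card_insert_le b ({c} : Finset (Sym2 V))
      simp only [Finset.card_singleton] at h1 h2 ⊢
      omega
    have hk2 : k = 2 := by omega
    subst hk2
    have hn6 : Fintype.card V ≤ 6 := by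
      have : Fintype.card V * 2 = 2 * G.edgeFinset.card := h2m
      omega
    -- u, p, q are not in e or f
    have hac : a ≠ c := fun h => huc (h ▸ hua)
    have hbc : b ≠ c := fun h => huc (h ▸ hub)
    have hpa : p ∈ a := hap ▸ Sym2.mem_mk_right _ _
    have hqb : q ∈ b := hbq ▸ Sym2.mem_mk_right _ _
    have hkeyu : ∀ z : Sym2 V, z ∈ G.edgeSet → u ∈ z → z = a ∨ z = b := fun z hz huz =>
      inc_two (degree_eq_of_regular hreg u) haE hbE hab hua hub hz huz
    have hkeyp : ∀ z : Sym2 V, z ∈ G.edgeSet → p ∈ z → z = a ∨ z = c := fun z hz hpz =>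
      inc_two (degree_eq_of_regular hreg p) haE hcE hac hpa hpc hz hpz
    have hkeyq : ∀ z : Sym2 V, z ∈ G.edgeSet → q ∈ z → z = b ∨ z = c := fun z hz hqz =>
      inc_two (degree_eq_of_regular hreg q) hbE hcE hbc hqb hqc hz hqz
    have hue : u ∉ s(x1, x2) := fun h => by
      rcases hkeyu _ he h with rfl | rfl; exacts [hae rfl, hbe rfl]
    have huf : u ∉ s(y1, y2) := fun h => by
      rcases hkeyu _ hf h with rfl | rfl; exacts [haf rfl, hbf rfl]
    have hpe : p ∉ s(x1, x2) := fun h => by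
      rcases hkeyp _ he h with rfl | rfl; exacts [hae rfl, hce rfl]
    have hpf : p ∉ s(y1, y2) := fun h => by
      rcases hkeyp _ hf h with rfl | rfl; exacts [haf rfl, hcf rfl]
    have hqe : q ∉ s(x1, x2) := fun h => by
      rcases hkeyq _ he h with rfl | rfl; exacts [hbe rfl, hce rfl]
    have hqf : q ∉ s(y1, y2) := fun h => by
      rcases hkeyq _ hf h with rfl | rfl; exacts [hbf rfl, hcf rfl]
    simp only [Sym2.mem_iff, not_or] at hue huf hpe hpf hqe hqf
    have hx12 : x1 ≠ x2 := hx.ne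
    have hy12 : y1 ≠ y2 := hy.ne
    have hx1y1 : x1 ≠ y1 := fun h => hef x1 hx1e (h ▸ Sym2.mem_mk_left _ _)
    have hx1y2 : x1 ≠ y2 := fun h => hef x1 hx1e (h ▸ Sym2.mem_mk_right _ _)
    have hx2y1 : x2 ≠ y1 := fun h => hef x2 hx2e (h ▸ Sym2.mem_mk_left _ _)
    have hx2y2 : x2 ≠ y2 := fun h => hef x2 hx2e (h ▸ Sym2.mem_mk_right _ _)
    have huq' : u ≠ q := huq.ne
    have hup' : u ≠ p := hup.ne
    have hT : ({u, p, q, x1, x2, y1, y2} : Finset V).card = 7 := by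
      rw [Finset.card_insert_of_notMem
          (by simp [hup', huq', hue.1, hue.2, huf.1, huf.2]),
        Finset.card_insert_of_notMem (by simp [hpq, hpe.1, hpe.2, hpf.1, hpf.2]),
        Finset.card_insert_of_notMem (by simp [hqe.1, hqe.2, hqf.1, hqf.2]),
        Finset.card_insert_of_notMem (by simp [hx12, hx1y1, hx1y2]),
        Finset.card_insert_of_notMem (by simp [hx2y1, hx2y2]),
        Finset.card_insert_of_notMem (by simp [hy12]), Finset.card_singleton]
    have := Finset.card_le_univ ({u, p, q, x1, x2, y1, y2} : Finset V)
    rw [hT] at this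
    omega





private lemma sym2_rep' {α : Type*} (z : Sym2 α) : ∃ x y, s(x, y) = z := by
  induction z using Sym2.ind with
  | _ x y => exact ⟨x, y, rfl⟩

private lemma rgraph_adj {G : SimpleGraph V} (P Q : ((G.lineGraph)ᶜ).edgeSet) :
    (RGraph G).Adj P Q ↔ P ≠ Q ∧
      ∀ ε : G.edgeSet, ε ∈ (P : Sym2 G.edgeSet) → ε ∉ (Q : Sym2 G.edgeSet) := by
  show ((G.lineGraph)ᶜ.lineGraph)ᶜ.Adj P Q ↔ _
  rw [compl_adj, lineGraph_adj_iff_exists]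
  constructor
  · rintro ⟨hne, h⟩
    exact ⟨hne, fun ε h1 h2 => h ⟨hne, ε, h1, h2⟩⟩
  · rintro ⟨hne, h⟩
    exact ⟨hne, fun ⟨_, ε, h1, h2⟩ => h ε h1 h2⟩

private lemma vert_spec {G : SimpleGraph V} (P : ((G.lineGraph)ᶜ).edgeSet) :
    ∃ ε φ : G.edgeSet, s(ε, φ) = (P : Sym2 G.edgeSet) ∧ (ε : Sym2 V) ≠ (φ : Sym2 V) ∧
      ∀ v : V, v ∈ (ε : Sym2 V) → v ∉ (φ : Sym2 V) := by
  obtain ⟨ε, φ, hP⟩ := sym2_rep' (P : Sym2 G.edgeSet)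
  have hadj : ((G.lineGraph)ᶜ).Adj ε φ := by
    rw [← SimpleGraph.mem_edgeSet, hP]; exact P.2
  rw [compl_adj, lineGraph_adj_iff_exists] at hadj
  refine ⟨ε, φ, hP, fun h => hadj.1 (Subtype.ext h), fun v hv1 hv2 => ?_⟩
  exact hadj.2 ⟨hadj.1, v, hv1, hv2⟩

private lemma vert_mk {G : SimpleGraph V} {a b : Sym2 V} (ha : a ∈ G.edgeSet)
    (hb : b ∈ G.edgeSet) (hab : a ≠ b) (hdisj : ∀ v, v ∈ a → v ∉ b) :
    s((⟨a, ha⟩ : G.edgeSet), (⟨b, hb⟩ : G.edgeSet)) ∈ ((G.lineGraph)ᶜ).edgeSet := by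
  rw [SimpleGraph.mem_edgeSet, compl_adj, lineGraph_adj_iff_exists]
  refine ⟨fun h => hab (congrArg Subtype.val h), ?_⟩
  rintro ⟨-, v, hv1, hv2⟩
  exact hdisj v hv1 hv2


private lemma step {G : SimpleGraph V} {k : ℕ} (hn : 5 ≤ Fintype.card V) (hk : 2 ≤ k)
    (hreg : G.IsRegularOfDegree k) (P Q : ((G.lineGraph)ᶜ).edgeSet) :
    (RGraph G).edist P Q ≤ 2 := by
  classical
  by_cases hPQ : P = Q
  · subst hPQ; simp
  by_cases hadj : (RGraph G).Adj P Q
  · refine le_trans (by simpa using SimpleGraph.edist_le hadj.toWalk) ?_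
    norm_num
  · have hshare : ∃ ε : G.edgeSet, ε ∈ (P : Sym2 G.edgeSet) ∧ ε ∈ (Q : Sym2 G.edgeSet) := by
      rw [rgraph_adj] at hadj
      push_neg at hadj
      exact hadj hPQ
    obtain ⟨ε, hεP, hεQ⟩ := hshare
    set f' : G.edgeSet := Sym2.Mem.other hεP with hf'def
    have hPf : s(ε, f') = (P : Sym2 G.edgeSet) := Sym2.other_spec hεP
    set g' : G.edgeSet := Sym2.Mem.other hεQ with hg'def
    have hQg : s(ε, g') = (Q : Sym2 G.edgeSet) := Sym2.other_spec hεQ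
    have hadjP : ((G.lineGraph)ᶜ).Adj ε f' := by
      rw [← SimpleGraph.mem_edgeSet, hPf]; exact P.2
    have hadjQ : ((G.lineGraph)ᶜ).Adj ε g' := by
      rw [← SimpleGraph.mem_edgeSet, hQg]; exact Q.2
    rw [compl_adj, lineGraph_adj_iff_exists] at hadjP hadjQ
    have hef : ∀ v : V, v ∈ (ε : Sym2 V) → v ∉ (f' : Sym2 V) := fun v h1 h2 =>
      hadjP.2 ⟨hadjP.1, v, h1, h2⟩
    have heg : ∀ v : V, v ∈ (ε : Sym2 V) → v ∉ (g' : Sym2 V) := fun v h1 h2 =>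
      hadjQ.2 ⟨hadjQ.1, v, h1, h2⟩
    have hfg : (f' : Sym2 V) ≠ (g' : Sym2 V) := by
      intro h
      apply hPQ
      apply Subtype.ext
      rw [← hPf, ← hQg, Subtype.ext h]
    obtain ⟨a, b, haE, hbE, hdisjab, hae, haf, hag, hbe, hbf, hbg⟩ :=
      key hn hk hreg ε.2 f'.2 g'.2 hef heg hfg
    have hab : a ≠ b := by
      intro h
      obtain ⟨x, y, rfl⟩ := sym2_rep' a
      exact hdisjab x (Sym2.mem_mk_left _ _) (h ▸ Sym2.mem_mk_left _ _)
    set R : ((G.lineGraph)ᶜ).edgeSet := ⟨_, vert_mk haE hbE hab hdisjab⟩ with hRdef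
    have hmemR : ∀ ψ : G.edgeSet, ψ ∈ (R : Sym2 G.edgeSet) → (ψ : Sym2 V) = a ∨ (ψ : Sym2 V) = b := by
      intro ψ hψ
      rcases Sym2.mem_iff.mp hψ with h | h
      · exact Or.inl (congrArg Subtype.val h)
      · exact Or.inr (congrArg Subtype.val h)
    have hmemP : ∀ ψ : G.edgeSet, ψ ∈ (P : Sym2 G.edgeSet) → ψ = ε ∨ ψ = f' := by
      intro ψ hψ
      rw [← hPf] at hψ
      exact Sym2.mem_iff.mp hψ
    have hmemQ : ∀ ψ : G.edgeSet, ψ ∈ (Q : Sym2 G.edgeSet) → ψ = ε ∨ ψ = g' := by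
      intro ψ hψ
      rw [← hQg] at hψ
      exact Sym2.mem_iff.mp hψ
    have hPR : (RGraph G).Adj P R := by
      rw [rgraph_adj]
      constructor
      · intro h
        rcases hmemR ε (h ▸ hεP) with h' | h'
        exacts [hae h'.symm, hbe h'.symm]
      · intro ψ hψP hψR
        rcases hmemP ψ hψP with rfl | rfl <;> rcases hmemR _ hψR with h' | h'
        exacts [hae h'.symm, hbe h'.symm, haf h'.symm, hbf h'.symm]
    have hRQ : (RGraph G).Adj R Q := by
      rw [rgraph_adj]
      constructor
      · intro h
        rcases hmemR ε (h ▸ hεQ) with h' | h'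
        exacts [hae h'.symm, hbe h'.symm]
      · intro ψ hψR hψQ
        rcases hmemQ ψ hψQ with rfl | rfl <;> rcases hmemR _ hψR with h' | h'
        exacts [hae h'.symm, hbe h'.symm, hag h'.symm, hbg h'.symm]
    refine le_trans (SimpleGraph.edist_le (Walk.cons hPR (Walk.cons hRQ Walk.nil))) ?_
    simp


end MyAux

theorem stmt13 {V : Type*} [Fintype V] (G : SimpleGraph V) (k : ℕ)
    (hn : 5 ≤ Fintype.card V) (hk : 2 ≤ k) (hconn : G.Connected)
    (hreg : G.IsRegularOfDegree k) :
    (RGraph G).diam ≤ 3 := by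
  have h2 : (RGraph G).ediam ≤ 2 :=
    SimpleGraph.ediam_le_of_edist_le fun P Q => step hn hk hreg P Q
  have h3 := ENat.toNat_le_toNat h2 (by simp)
  simp only [ENat.toNat_ofNat] at h3
  simp only [SimpleGraph.diam]
  omega
end

section
/- For all integers n ≥ 5 and k ≥ 2 with nk even, setting d = (1/8)(nk-8)(nk-4k+2) + 1 and λ* = nk/2 - 2k + 1, the inequality λ* ≤ 2√(d-1) holds; equivalently, 2√(d-1) - λ* = ((1/2)(nk-4k+2)((1/2)nk + 2k - 9)) / (√((1/2)(nk-8)(nk-4k+2)) + (1/2)(nk-4k+2)) ≥ 0. -/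
open SimpleGraph Polynomial

theorem stmt14 (n k : ℤ) (hn : 5 ≤ n) (hk : 2 ≤ k) (heven : Even (n * k)) :
    ((n : ℝ) * k / 2 - 2 * k + 1 ≤
      2 * Real.sqrt (((n : ℝ) * k - 8) * ((n : ℝ) * k - 4 * k + 2) / 8 + 1 - 1)) ∧
    2 * Real.sqrt (((n : ℝ) * k - 8) * ((n : ℝ) * k - 4 * k + 2) / 8 + 1 - 1) -
        ((n : ℝ) * k / 2 - 2 * k + 1) =
      ((1 / 2) * ((n : ℝ) * k - 4 * k + 2) * ((1 / 2) * ((n : ℝ) * k) + 2 * k - 9)) /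
        (Real.sqrt ((1 / 2) * ((n : ℝ) * k - 8) * ((n : ℝ) * k - 4 * k + 2)) +
          (1 / 2) * ((n : ℝ) * k - 4 * k + 2)) := by
  have hn' : (5:ℝ) ≤ (n:ℝ) := by exact_mod_cast hn
  have hk' : (2:ℝ) ≤ (k:ℝ) := by exact_mod_cast hk
  set x : ℝ := (n:ℝ) * (k:ℝ) with hxdef
  have hnk : (10:ℝ) ≤ x := by nlinarith
  have ha : 0 < x - 4*k + 2 := by nlinarith
  have hx18 : 18 ≤ x + 4*k := by nlinarith
  have harg : 0 ≤ (1/2)*(x-8)*(x-4*k+2) := by nlinarith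
  set s := Real.sqrt ((1/2)*(x-8)*(x-4*k+2)) with hsdef
  have hs0 : 0 ≤ s := Real.sqrt_nonneg _
  have hssq : s^2 = (1/2)*(x-8)*(x-4*k+2) := Real.sq_sqrt harg
  have heq : Real.sqrt ((x-8)*(x-4*k+2)/8 + 1 - 1) = s/2 := by
    rw [show (x-8)*(x-4*k+2)/8 + 1 - 1 = ((1/2)*(x-8)*(x-4*k+2))/4 by ring,
      Real.sqrt_div harg,
      show Real.sqrt 4 = 2 by
        rw [show (4:ℝ) = 2^2 by norm_num, Real.sqrt_sq (by norm_num : (0:ℝ) ≤ 2)],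
      hsdef]
  rw [heq]
  constructor
  · nlinarith [hssq, hs0, ha, hx18]
  · have hden : 0 < s + (1/2)*(x-4*k+2) := by nlinarith
    rw [eq_div_iff (ne_of_gt hden)]
    nlinarith [hssq]
end

section
/- If a connected d-regular graph H satisfies that every eigenvalue λ of H other than d has |λ| ≤ 2√(d-1), and also that λ = -d does not occur except possibly as excluded, then H is Ramanujan; in particular, for G a connected k-regular graph on n ≥ 5 vertices with k ≥ 2, the graph R(G) := L(L(G)^c)^c is Ramanujan. -/
open SimpleGraph Polynomial

open Finset BigOperators Matrix
open scoped Classical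

section Aux
variable {W : Type*} [Fintype W]

lemma adjM_apply (H : SimpleGraph W) (i j : W) [Decidable (H.Adj i j)] :
    adjM H i j = if H.Adj i j then (1:ℝ) else 0 := by
  unfold adjM
  rw [SimpleGraph.adjMatrix_apply]
  congr

lemma adjM_nonneg (H : SimpleGraph W) (i j : W) : 0 ≤ adjM H i j := by
  classical
  rw [adjM_apply]; split <;> norm_num

lemma adjM_symm (H : SimpleGraph W) (i j : W) : adjM H i j = adjM H j i := by
  classical
  rw [adjM_apply, adjM_apply]
  simp [SimpleGraph.adj_comm]

lemma adjM_mulVec (H : SimpleGraph W) (v : W → ℝ) (i : W) :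
    (adjM H).mulVec v i = ∑ j, adjM H i j * v j := by
  simp [Matrix.mulVec, dotProduct]

/-- real-valued regularity -/
def RegR (H : SimpleGraph W) (r : ℝ) : Prop := ∀ i, ∑ j, adjM H i j = r

lemma adjM_compl [DecidableEq W] (H : SimpleGraph W) (i j : W) :
    adjM Hᶜ i j = (if i = j then 0 else 1) - adjM H i j := by
  classical
  rw [adjM_apply, adjM_apply]
  by_cases h : i = j
  · subst h; simp
  · by_cases h2 : H.Adj i j
    · simp [h, h2, SimpleGraph.compl_adj]
    · simp [h, h2, SimpleGraph.compl_adj]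

lemma regR_compl {H : SimpleGraph W} {r : ℝ} (h : RegR H r) :
    RegR Hᶜ ((Fintype.card W : ℝ) - 1 - r) := by
  classical
  intro i
  have e1 : ∑ j, adjM Hᶜ i j = ∑ j, ((if i = j then (0:ℝ) else 1) - adjM H i j) :=
    Finset.sum_congr rfl fun j _ => adjM_compl H i j
  rw [e1, Finset.sum_sub_distrib, h i]
  congr 1
  have : ∑ j, (if i = j then (0:ℝ) else 1) = ∑ j : W, 1 - ∑ j, (if i = j then (1:ℝ) else 0) := by
    rw [← Finset.sum_sub_distrib]
    refine Finset.sum_congr rfl fun j _ => ?_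
    by_cases h : i = j <;> simp [h]
  rw [this]
  simp [Finset.sum_ite_eq, Finset.card_univ]

/-- eigenvector of complement transfers -/
lemma eig_compl {H : SimpleGraph W} {v : W → ℝ} {μ : ℝ}
    (hsum : ∑ i, v i = 0) (heig : (adjM Hᶜ).mulVec v = μ • v) :
    (adjM H).mulVec v = (-1 - μ) • v := by
  classical
  funext i
  have h1 : (adjM Hᶜ).mulVec v i = μ * v i := by rw [heig]; rfl
  rw [adjM_mulVec] at h1
  have e1 : ∑ j, adjM Hᶜ i j * v j
      = ∑ j, ((if i = j then (0:ℝ) else 1) * v j - adjM H i j * v j) := by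
    refine Finset.sum_congr rfl fun j _ => ?_
    rw [adjM_compl, sub_mul]
  rw [e1, Finset.sum_sub_distrib] at h1
  have e2 : ∑ j, (if i = j then (0:ℝ) else 1) * v j = - v i := by
    have : ∑ j, (if i = j then (0:ℝ) else 1) * v j
        = ∑ j, (v j - (if i = j then (1:ℝ) else 0) * v j) := by
      refine Finset.sum_congr rfl fun j _ => ?_
      by_cases h : i = j <;> simp [h]
    rw [this, Finset.sum_sub_distrib, hsum]
    simp [Finset.sum_ite_eq]
  rw [e2] at h1
  rw [adjM_mulVec]
  have : (adjM H).mulVec v i = ∑ j, adjM H i j * v j := adjM_mulVec H v i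
  simp only [Pi.smul_apply, smul_eq_mul]
  linarith

/-- orthogonality to constants for eigvec with eigenvalue ≠ r -/
lemma eig_orth {H : SimpleGraph W} {r : ℝ} (hreg : RegR H r) {v : W → ℝ} {μ : ℝ}
    (heig : (adjM H).mulVec v = μ • v) (hμ : μ ≠ r) : ∑ i, v i = 0 := by
  classical
  have h1 : ∑ i, (adjM H).mulVec v i = μ * ∑ i, v i := by
    rw [heig]; simp [Finset.mul_sum]
  have h2 : ∑ i, (adjM H).mulVec v i = r * ∑ i, v i := by
    have : ∑ i, (adjM H).mulVec v i = ∑ j, (∑ i, adjM H i j) * v j := by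
      simp only [adjM_mulVec]
      rw [Finset.sum_comm]
      simp [Finset.sum_mul]
    rw [this]
    have : ∀ j, (∑ i, adjM H i j) = r := by
      intro j
      rw [← hreg j]
      exact Finset.sum_congr rfl fun i _ => (adjM_symm H i j).symm ▸ rfl
    calc ∑ j, (∑ i, adjM H i j) * v j = ∑ j, r * v j :=
          Finset.sum_congr rfl fun j _ => by rw [this j]
      _ = r * ∑ j, v j := by rw [Finset.mul_sum]
  have : (μ - r) * ∑ i, v i = 0 := by linarith
  rcases mul_eq_zero.mp this with h | h
  · exact absurd (by linarith : μ = r) hμ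
  · exact h

end Aux

section Inc
variable {W : Type*} [Fintype W]

/-- incidence matrix -/

noncomputable def Bm (H : SimpleGraph W) [Fintype H.edgeSet] : Matrix W H.edgeSet ℝ :=
  fun v e => if v ∈ (e : Sym2 W) then 1 else 0

variable (H : SimpleGraph W) [Fintype H.edgeSet]

/-- sum of an indicator of a single Sym2 value over the edge subtype -/
lemma sum_subtype_ind (a : Sym2 W) :
    ∑ e : H.edgeSet, (if (e : Sym2 W) = a then (1:ℝ) else 0)
      = if a ∈ H.edgeSet then 1 else 0 := by
  classical
  by_cases h : a ∈ H.edgeSet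
  · rw [if_pos h]
    have : ∀ e : H.edgeSet, ((e : Sym2 W) = a) ↔ e = ⟨a, h⟩ := by
      intro e; constructor
      · intro he; exact Subtype.ext he
      · intro he; rw [he]
    calc ∑ e : H.edgeSet, (if (e : Sym2 W) = a then (1:ℝ) else 0)
        = ∑ e : H.edgeSet, (if e = ⟨a, h⟩ then (1:ℝ) else 0) :=
          Finset.sum_congr rfl fun e _ => by rw [if_congr (this e) rfl rfl]
      _ = 1 := by simp [Finset.sum_ite_eq]
  · rw [if_neg h]
    refine Finset.sum_eq_zero fun e _ => ?_
    rw [if_neg]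
    intro he
    exact h (he ▸ e.2)

/-- column sums: each edge contains exactly two vertices -/
lemma col_sum_B (e : H.edgeSet) : ∑ v, Bm H v e = 2 := by
  classical
  obtain ⟨s, hs⟩ := e
  induction s using Sym2.ind with
  | _ a b =>
    have hab : a ≠ b := by
      intro h; exact H.not_isDiag_of_mem_edgeSet hs (by rw [h]; exact Sym2.mk_isDiag_iff.mpr rfl)
    have : ∀ v, Bm H v ⟨s(a,b), hs⟩ = (if v = a then (1:ℝ) else 0) + (if v = b then 1 else 0) := by
      intro v
      unfold Bm
      by_cases h1 : v = a
      · subst h1; simp [Sym2.mem_iff, hab]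
      · by_cases h2 : v = b
        · subst h2; simp [Sym2.mem_iff, h1, Ne.symm hab]
        · simp [Sym2.mem_iff, h1, h2]
    rw [Finset.sum_congr rfl fun v _ => this v, Finset.sum_add_distrib]
    simp [Finset.sum_ite_eq]
    norm_num

/-- row "master" lemma : B * Bᵀ entries -/
lemma BBt_entry (u v : W) :
    ∑ e : H.edgeSet, Bm H u e * Bm H v e
      = if u = v then (∑ j, adjM H u j) else adjM H u v := by
  classical
  by_cases huv : u = v
  · subst huv
    rw [if_pos rfl]
    have e1 : ∀ e : H.edgeSet, Bm H u e * Bm H u e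
        = ∑ j, (if (e : Sym2 W) = s(u, j) then (1:ℝ) else 0) := by
      intro e
      unfold Bm
      by_cases h : u ∈ (e : Sym2 W)
      · rw [if_pos h]
        obtain ⟨y, hy⟩ := Sym2.mem_iff_exists.mp h
        have hyy : ∀ j, ((e : Sym2 W) = s(u, j)) ↔ j = y := by
          intro j; constructor
          · intro hj; exact Sym2.congr_right.mp (hy ▸ hj : s(u,y) = s(u,j)) |>.symm
          · intro hj; rw [hj, ← hy]
        rw [Finset.sum_congr rfl fun j _ => if_congr (hyy j) rfl rfl]
        simp [Finset.sum_ite_eq']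
      · rw [if_neg h, zero_mul, eq_comm]
        refine Finset.sum_eq_zero fun j _ => ?_
        rw [if_neg]
        intro hj
        exact h (by rw [hj]; exact Sym2.mem_mk_left u j)
    rw [Finset.sum_congr rfl fun e _ => e1 e]
    rw [Finset.sum_comm (s := (univ : Finset H.edgeSet)) (t := (univ : Finset W))
      (f := fun e j => if (e : Sym2 W) = s(u,j) then (1:ℝ) else 0)]
    refine Finset.sum_congr rfl fun j _ => ?_
    rw [sum_subtype_ind]
    rw [adjM_apply]
    by_cases h : H.Adj u j
    · rw [if_pos h, if_pos (H.mem_edgeSet.mpr h)]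
    · rw [if_neg h, if_neg (fun hc => h (H.mem_edgeSet.mp hc))]
  · rw [if_neg huv]
    have e1 : ∀ e : H.edgeSet, Bm H u e * Bm H v e
        = if (e : Sym2 W) = s(u, v) then (1:ℝ) else 0 := by
      intro e
      unfold Bm
      by_cases h1 : u ∈ (e : Sym2 W) ∧ v ∈ (e : Sym2 W)
      · rw [if_pos h1.1, if_pos h1.2, if_pos ((Sym2.mem_and_mem_iff huv).mp h1)]
        norm_num
      · rw [if_neg (fun hc => h1 ((Sym2.mem_and_mem_iff huv).mpr hc))]
        rcases not_and_or.mp h1 with h | h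
        · rw [if_neg h]; ring
        · rw [if_neg h]; ring
    rw [Finset.sum_congr rfl fun e _ => e1 e, sum_subtype_ind]
    rw [adjM_apply]
    by_cases h : H.Adj u v
    · rw [if_pos (H.mem_edgeSet.mpr h), if_pos h]
    · rw [if_neg (fun hc => h (H.mem_edgeSet.mp hc)), if_neg h]

end Inc

section Line
variable {W : Type*} [Fintype W] (H : SimpleGraph W) [Fintype H.edgeSet]

lemma Bm_sq (u : W) (e : H.edgeSet) : Bm H u e * Bm H u e = Bm H u e := by
  unfold Bm; split <;> norm_num

lemma row_sum_B (u : W) : ∑ e : H.edgeSet, Bm H u e = ∑ j, adjM H u j := by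
  have := BBt_entry H u u
  rw [if_pos rfl] at this
  rw [← this]
  exact Finset.sum_congr rfl fun e _ => (Bm_sq H u e).symm

lemma BtB_entry (e f : H.edgeSet) :
    ∑ u, Bm H u e * Bm H u f
      = adjM (H.lineGraph) e f + (if e = f then (2:ℝ) else 0) := by
  by_cases hef : e = f
  · subst hef
    rw [if_pos rfl, adjM_apply, if_neg (H.lineGraph.irrefl), zero_add]
    rw [Finset.sum_congr rfl fun u _ => Bm_sq H u e]
    exact col_sum_B H e
  · rw [if_neg hef, add_zero, adjM_apply]
    by_cases hadj : (H.lineGraph).Adj e f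
    · rw [if_pos hadj]
      obtain ⟨-, w, hw1, hw2⟩ := lineGraph_adj_iff_exists.mp hadj
      have key : ∀ u, Bm H u e * Bm H u f = if u = w then (1:ℝ) else 0 := by
        intro u
        unfold Bm
        by_cases hu : u = w
        · subst hu; rw [if_pos hw1, if_pos hw2, if_pos rfl]; norm_num
        · rw [if_neg hu]
          by_cases h1 : u ∈ (e : Sym2 W)
          · by_cases h2 : u ∈ (f : Sym2 W)
            · exact absurd (Subtype.ext (Sym2.eq_of_ne_mem hu h1 hw1 h2 hw2)) hef
            · rw [if_neg h2, mul_zero]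
          · rw [if_neg h1, zero_mul]
      rw [Finset.sum_congr rfl fun u _ => key u]
      simp [Finset.sum_ite_eq']
    · rw [if_neg hadj]
      refine Finset.sum_eq_zero fun u _ => ?_
      unfold Bm
      by_cases h1 : u ∈ (e : Sym2 W)
      · by_cases h2 : u ∈ (f : Sym2 W)
        · exact absurd (lineGraph_adj_iff_exists.mpr ⟨hef, u, h1, h2⟩) hadj
        · rw [if_neg h2, mul_zero]
      · rw [if_neg h1, zero_mul]

lemma BtB_mat :
    (Bm H)ᵀ * (Bm H) = adjM (H.lineGraph) + (2:ℝ) • (1 : Matrix H.edgeSet H.edgeSet ℝ) := by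
  ext e f
  rw [Matrix.mul_apply]
  simp only [Matrix.transpose_apply, Matrix.add_apply, Matrix.smul_apply, Matrix.one_apply,
    smul_eq_mul]
  rw [BtB_entry]
  split <;> norm_num

lemma BBt_mat {r : ℝ} (hreg : RegR H r) :
    (Bm H) * (Bm H)ᵀ = adjM H + r • (1 : Matrix W W ℝ) := by
  ext u v
  rw [Matrix.mul_apply]
  simp only [Matrix.transpose_apply, Matrix.add_apply, Matrix.smul_apply, Matrix.one_apply,
    smul_eq_mul]
  rw [BBt_entry]
  by_cases h : u = v
  · subst h; rw [if_pos rfl, if_pos rfl, hreg u, adjM_apply, if_neg (H.irrefl)]; ring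
  · rw [if_neg h, if_neg h]; ring

lemma regR_line {r : ℝ} (hreg : RegR H r) : RegR (H.lineGraph) (2*r - 2) := by
  intro e
  have key : ∀ f, adjM (H.lineGraph) e f
      = (∑ u, Bm H u e * Bm H u f) - (if e = f then (2:ℝ) else 0) := by
    intro f; rw [BtB_entry]; ring
  rw [Finset.sum_congr rfl fun f _ => key f, Finset.sum_sub_distrib]
  have h1 : ∑ f : H.edgeSet, ∑ u, Bm H u e * Bm H u f = 2 * r := by
    rw [Finset.sum_comm (s := (univ : Finset H.edgeSet)) (t := (univ : Finset W))
      (f := fun f u => Bm H u e * Bm H u f)]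
    have : ∀ u, ∑ f : H.edgeSet, Bm H u e * Bm H u f = Bm H u e * r := by
      intro u
      rw [← Finset.mul_sum, row_sum_B, hreg u]
    rw [Finset.sum_congr rfl fun u _ => this u, ← Finset.sum_mul, col_sum_B]
  have h2 : ∑ f : H.edgeSet, (if e = f then (2:ℝ) else 0) = 2 := by
    simp [Finset.sum_ite_eq]
  rw [h1, h2]

lemma edge_count {r : ℝ} (hreg : RegR H r) :
    2 * (Fintype.card H.edgeSet : ℝ) = (Fintype.card W : ℝ) * r := by
  have h1 : ∑ e : H.edgeSet, ∑ w, Bm H w e = 2 * (Fintype.card H.edgeSet : ℝ) := by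
    rw [Finset.sum_congr rfl fun e _ => col_sum_B H e]
    simp [Finset.card_univ, mul_comm]
  have h2 : ∑ w, ∑ e : H.edgeSet, Bm H w e = (Fintype.card W : ℝ) * r := by
    have : ∀ w, ∑ e : H.edgeSet, Bm H w e = r := fun w => by rw [row_sum_B, hreg w]
    rw [Finset.sum_congr rfl fun w _ => this w]
    simp [Finset.card_univ, mul_comm]
  rw [← h1, Finset.sum_comm (s := (univ : Finset H.edgeSet)) (t := (univ : Finset W))
      (f := fun e w => Bm H w e), h2]

lemma line_eig {r : ℝ} (hreg : RegR H r) {θ : ℝ} {y : H.edgeSet → ℝ}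
    (hy : y ≠ 0) (hsum : ∑ e, y e = 0)
    (heig : (adjM (H.lineGraph)).mulVec y = θ • y) (hθ : θ ≠ -2) :
    ∃ x : W → ℝ, x ≠ 0 ∧ ∑ w, x w = 0 ∧ (adjM H).mulVec x = (θ + 2 - r) • x := by
  have h1 : ((Bm H)ᵀ * Bm H).mulVec y = (θ + 2) • y := by
    rw [BtB_mat, Matrix.add_mulVec, heig, Matrix.smul_mulVec, Matrix.one_mulVec]
    funext e
    simp only [Pi.add_apply, Pi.smul_apply, smul_eq_mul]
    ring
  set x : W → ℝ := (Bm H).mulVec y with hx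
  have h2 : (adjM H).mulVec x = (θ + 2 - r) • x := by
    have h3 : ((Bm H) * (Bm H)ᵀ).mulVec x = (θ + 2) • x := by
      rw [hx, Matrix.mulVec_mulVec, Matrix.mul_assoc, ← Matrix.mulVec_mulVec,
        h1, Matrix.mulVec_smul]
    rw [BBt_mat H hreg, Matrix.add_mulVec, Matrix.smul_mulVec, Matrix.one_mulVec] at h3
    funext w
    have := congrFun h3 w
    simp only [Pi.add_apply, Pi.smul_apply, smul_eq_mul] at this ⊢
    linarith
  refine ⟨x, ?_, ?_, h2⟩
  · intro hx0
    have hBt : (Bm H)ᵀ.mulVec x = (θ + 2) • y := by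
      rw [hx, Matrix.mulVec_mulVec, h1]
    rw [hx0, Matrix.mulVec_zero] at hBt
    have : y = 0 := by
      have hne : θ + 2 ≠ 0 := fun hc => hθ (by linarith)
      funext e
      have := congrFun hBt e
      simp only [Pi.zero_apply, Pi.smul_apply, smul_eq_mul] at this ⊢
      rcases mul_eq_zero.mp this.symm with h | h
      · exact absurd h hne
      · exact h
    exact hy this
  · rw [hx]
    have : ∀ w, (Bm H).mulVec y w = ∑ e : H.edgeSet, Bm H w e * y e := by
      intro w; simp [Matrix.mulVec, dotProduct]
    rw [Finset.sum_congr rfl fun w _ => this w,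
      Finset.sum_comm (s := (univ : Finset W)) (t := (univ : Finset H.edgeSet))
      (f := fun w e => Bm H w e * y e)]
    have : ∀ e : H.edgeSet, ∑ w, Bm H w e * y e = 2 * y e := by
      intro e; rw [← Finset.sum_mul, col_sum_B]
    rw [Finset.sum_congr rfl fun e _ => this e, ← Finset.mul_sum, hsum, mul_zero]

end Line

section Spectral
variable {W : Type*} [Fintype W]

lemma eig_abs_le {H : SimpleGraph W} {r : ℝ} (hreg : RegR H r) {v : W → ℝ} {μ : ℝ}
    (hv : v ≠ 0) (heig : (adjM H).mulVec v = μ • v) : |μ| ≤ r := by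
  have hex : ∃ j, v j ≠ 0 := by
    by_contra h; push_neg at h; exact hv (funext h)
  obtain ⟨j, hj⟩ := hex
  obtain ⟨i₀, -, hmax⟩ := Finset.exists_max_image univ (fun i => |v i|) ⟨j, mem_univ j⟩
  have hpos : 0 < |v i₀| := lt_of_lt_of_le (abs_pos.mpr hj) (hmax j (mem_univ j))
  have key : |μ| * |v i₀| ≤ r * |v i₀| := by
    have h1 : |μ| * |v i₀| = |(adjM H).mulVec v i₀| := by
      rw [heig]; simp [abs_mul]
    rw [h1, adjM_mulVec]
    calc |∑ l, adjM H i₀ l * v l| ≤ ∑ l, |adjM H i₀ l * v l| := Finset.abs_sum_le_sum_abs _ _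
      _ = ∑ l, adjM H i₀ l * |v l| := Finset.sum_congr rfl fun l _ => by
            rw [abs_mul, abs_of_nonneg (adjM_nonneg H i₀ l)]
      _ ≤ ∑ l, adjM H i₀ l * |v i₀| := Finset.sum_le_sum fun l _ =>
            mul_le_mul_of_nonneg_left (hmax l (mem_univ l)) (adjM_nonneg H i₀ l)
      _ = r * |v i₀| := by rw [← Finset.sum_mul, hreg i₀]
  exact le_of_mul_le_mul_right key hpos

lemma top_eig_orth_false {H : SimpleGraph W} {r : ℝ} (hconn : H.Connected) (hreg : RegR H r)
    {v : W → ℝ} (hv : v ≠ 0) (hsum : ∑ i, v i = 0)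
    (heig : (adjM H).mulVec v = r • v) : False := by
  have hex : ∃ j, v j ≠ 0 := by
    by_contra h; push_neg at h; exact hv (funext h)
  obtain ⟨j, hj⟩ := hex
  obtain ⟨i₀, -, hmax⟩ := Finset.exists_max_image univ v ⟨j, mem_univ j⟩
  set c := v i₀ with hc
  have hcpos : 0 < c := by
    by_contra h
    push_neg at h
    have hle : ∀ i ∈ (univ : Finset W), v i ≤ 0 := fun i _ => le_trans (hmax i (mem_univ i)) h
    have hz : ∀ i ∈ (univ : Finset W), v i = 0 := by
      intro i hi
      have := Finset.sum_eq_zero_iff_of_nonneg (fun l (_ : l ∈ univ) =>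
        neg_nonneg.mpr (hle l (mem_univ l)))
      have hsum' : ∑ l, -v l = 0 := by simpa using hsum
      have := this.mp hsum' i hi
      linarith [neg_eq_zero.mp this]
    exact hj (hz j (mem_univ j))
  have step : ∀ i, v i = c → ∀ l, H.Adj i l → v l = c := by
    intro i hi l hil
    have h1 : ∑ t, adjM H i t * (c - v t) = 0 := by
      have e1 : ∑ t, adjM H i t * (c - v t)
          = (∑ t, adjM H i t) * c - ∑ t, adjM H i t * v t := by
        rw [Finset.sum_mul, ← Finset.sum_sub_distrib]
        exact Finset.sum_congr rfl fun t _ => by ring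
      rw [e1, hreg i, ← adjM_mulVec, heig]
      simp only [Pi.smul_apply, smul_eq_mul, hi]
      ring
    have h2 : ∀ t ∈ (univ : Finset W), 0 ≤ adjM H i t * (c - v t) := fun t _ =>
      mul_nonneg (adjM_nonneg H i t) (sub_nonneg.mpr (hmax t (mem_univ t)))
    have h3 := (Finset.sum_eq_zero_iff_of_nonneg h2).mp h1 l (mem_univ l)
    have h4 : adjM H i l = 1 := by rw [adjM_apply, if_pos hil]
    rw [h4, one_mul, sub_eq_zero] at h3
    exact h3.symm
  have hall : ∀ x, v x = c := by
    have walkstep : ∀ {a b : W} (_ : H.Walk a b), v a = c → v b = c := by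
      intro a b p
      induction p with
      | nil => exact id
      | cons h p ih => exact fun ha => ih (step _ ha _ h)
    intro x
    obtain ⟨p⟩ := hconn.preconnected i₀ x
    exact walkstep p rfl
  have : ∑ i, v i = (Fintype.card W : ℝ) * c := by
    rw [Finset.sum_congr rfl fun i _ => hall i]
    simp [Finset.card_univ, mul_comm]
  rw [hsum] at this
  have hcard : 0 < (Fintype.card W : ℝ) := by
    have : 0 < Fintype.card W := Fintype.card_pos_iff.mpr ⟨i₀⟩
    exact_mod_cast this
  nlinarith

lemma connected_of_no_top {H : SimpleGraph W} [Nonempty W] {r : ℝ} (hreg : RegR H r)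
    (h : ∀ v : W → ℝ, v ≠ 0 → ∑ i, v i = 0 → (adjM H).mulVec v = r • v → False) :
    H.Connected := by
  rw [SimpleGraph.connected_iff]
  refine ⟨?_, inferInstance⟩
  by_contra hpre
  unfold SimpleGraph.Preconnected at hpre
  push_neg at hpre
  obtain ⟨u, w, hw⟩ := hpre
  set P : Finset W := univ.filter (fun x => H.Reachable u x) with hP
  set s : ℝ := (P.card : ℝ) with hs
  set N : ℝ := (Fintype.card W : ℝ) with hN
  set v : W → ℝ := fun x => if H.Reachable u x then N - s else -s with hv
  have huP : u ∈ P := Finset.mem_filter.mpr ⟨mem_univ u, Reachable.refl u⟩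
  have hwP : w ∉ P := by simp [hP, hw]
  have hslt : s < N := by
    have : P.card < Fintype.card W := by
      rw [← Finset.card_univ]
      exact Finset.card_lt_card (Finset.ssubset_univ_iff.mpr (fun hc => hwP (hc ▸ mem_univ w)))
    rw [hs, hN]; exact_mod_cast this
  refine h v ?_ ?_ ?_
  · intro h0
    have h1 : v u = 0 := congrFun h0 u
    have h2 : v u = N - s := if_pos (Reachable.refl u)
    linarith
  · have e0 : ∑ i, v i
        = ∑ _i ∈ P, (N - s) + ∑ _i ∈ univ.filter (fun x => ¬H.Reachable u x), (-s) := by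
      rw [hv, Finset.sum_ite]
    have e1 : (univ.filter (fun x => ¬H.Reachable u x)) = Pᶜ := by
      ext x; simp [hP]
    have hle : P.card ≤ Fintype.card W := by
      rw [← Finset.card_univ]; exact card_le_card (subset_univ P)
    rw [e0, e1, Finset.sum_const, Finset.sum_const, Finset.card_compl,
      nsmul_eq_mul, nsmul_eq_mul, Nat.cast_sub hle, ← hs, ← hN]
    ring
  · funext x
    rw [adjM_mulVec]
    have key : ∀ l, adjM H x l * v l = adjM H x l * v x := by
      intro l
      by_cases hadj : H.Adj x l
      · have hvv : v l = v x := by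
          have hiff : H.Reachable u l ↔ H.Reachable u x :=
            ⟨fun hr => hr.trans (hadj.symm.reachable), fun hr => hr.trans hadj.reachable⟩
          show (if H.Reachable u l then N - s else -s) = (if H.Reachable u x then N - s else -s)
          by_cases hx : H.Reachable u x
          · rw [if_pos (hiff.mpr hx), if_pos hx]
          · rw [if_neg (fun hc => hx (hiff.mp hc)), if_neg hx]
        rw [hvv]
      · rw [adjM_apply, if_neg hadj, zero_mul, zero_mul]
    rw [Finset.sum_congr rfl fun l _ => key l, ← Finset.sum_mul, hreg x]
    simp

lemma degree_cast (H : SimpleGraph W) (i : W) [Fintype (H.neighborSet i)] :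
    (H.degree i : ℝ) = ∑ j, adjM H i j := by
  rw [← SimpleGraph.card_neighborSet_eq_degree]
  have h1 : Fintype.card ↥(H.neighborSet i) = (univ.filter (fun j => H.Adj i j)).card := by
    rw [← Fintype.card_subtype]
    exact Fintype.card_congr (Equiv.subtypeEquivRight (fun x => Iff.rfl))
  rw [h1]
  rw [Finset.sum_congr rfl fun j _ => adjM_apply H i j]
  rw [Finset.sum_boole]

lemma regR_of_regular {H : SimpleGraph W} [Finite W] {d : ℕ} (h : H.IsRegularOfDegree d) :
    RegR H d := fun i => by rw [← degree_cast, h i]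

lemma regular_of_regR {H : SimpleGraph W} [Finite W] {d : ℕ} (h : RegR H d) :
    H.IsRegularOfDegree d := fun i =>
  Nat.cast_injective (R := ℝ) ((degree_cast H i).trans (h i))

end Spectral

lemma isEigval_iff {W : Type*} [inst : Fintype W] (H : SimpleGraph W) (μ : ℝ) :
    IsEigval H μ ↔ ∃ v : W → ℝ, v ≠ 0 ∧ (adjM H).mulVec v = μ • v := by
  have h : Fintype.ofFinite W = inst := Subsingleton.elim _ _
  unfold IsEigval
  rw [h]

lemma regR_congr {W : Type*} [Fintype W] {H : SimpleGraph W} {a b : ℝ}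
    (h : RegR H a) (e : a = b) : RegR H b := fun i => e ▸ h i

set_option maxHeartbeats 2000000 in
theorem stmt15 {V : Type*} [Fintype V] (G : SimpleGraph V) (k : ℕ)
    (hn : 5 ≤ Fintype.card V) (hk : 2 ≤ k) (hconn : G.Connected)
    (hreg : G.IsRegularOfDegree k) :
    (∀ (W : Type) [Fintype W], ∀ (H : SimpleGraph W) (d : ℕ),
        H.Connected → H.IsRegularOfDegree d →
        (∀ μ : ℝ, IsEigval H μ → |μ| ≠ (d : ℝ) → |μ| ≤ 2 * Real.sqrt ((d : ℝ) - 1)) →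
        IsRamanujan H d) ∧
    ∃ d : ℕ, IsRamanujan (RGraph G) d := by
  classical
  refine ⟨fun W _ H d h1 h2 h3 => ⟨h1, h2, h3⟩, ?_⟩
  letI iE1 : Fintype ↑G.edgeSet := Fintype.ofFinite _
  letI iE2 : Fintype ↑((G.lineGraph)ᶜ).edgeSet := Fintype.ofFinite _
  set n : ℝ := (Fintype.card V : ℝ) with hn_def
  set m : ℝ := (Fintype.card ↑G.edgeSet : ℝ) with hm_def
  set M : ℝ := (Fintype.card ↑((G.lineGraph)ᶜ).edgeSet : ℝ) with hM_def
  have hkR : (2:ℝ) ≤ (k:ℝ) := by exact_mod_cast hk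
  have hnR : (5:ℝ) ≤ n := by rw [hn_def]; exact_mod_cast hn
  have hregG : RegR G (k:ℝ) := regR_of_regular hreg
  have hmk : 2 * m = n * k := edge_count G hregG
  set d1 : ℝ := m - 2*k + 1 with hd1_def
  have hregQ : RegR (G.lineGraph)ᶜ d1 :=
    regR_congr (regR_compl (regR_line G hregG)) (by rw [← hm_def, hd1_def]; ring)
  have hMM : 2 * M = m * d1 := edge_count _ hregQ
  set D : ℝ := M - 2*d1 + 1 with hD_def
  have hregR : RegR (RGraph G) D :=
    regR_congr (regR_compl (regR_line _ hregQ)) (by rw [← hM_def, hD_def]; ring)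
  have hm5 : (5:ℝ) ≤ m := by
    nlinarith [mul_nonneg (by linarith : (0:ℝ) ≤ n - 5) (by linarith : (0:ℝ) ≤ (k:ℝ) - 2)]
  have h2m5k : 5*(k:ℝ) ≤ 2*m := by
    nlinarith [mul_nonneg (by linarith : (0:ℝ) ≤ n - 5) (by linarith : (0:ℝ) ≤ (k:ℝ))]
  have hd12 : (2:ℝ) ≤ d1 := by rw [hd1_def]; linarith
  have hM5 : (5:ℝ) ≤ M := by
    nlinarith [mul_nonneg (by linarith : (0:ℝ) ≤ m - 5) (by linarith : (0:ℝ) ≤ d1 - 2)]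
  have hD1 : 2*(D - 1) = d1*(m - 4) := by rw [hD_def]; linear_combination hMM
  have hD2 : (2:ℝ) ≤ D := by
    nlinarith [mul_nonneg (by linarith : (0:ℝ) ≤ d1 - 2) (by linarith : (0:ℝ) ≤ m - 5)]
  have spec_cases : ∀ (v : ↑((G.lineGraph)ᶜ).edgeSet → ℝ) (μ : ℝ), v ≠ 0 →
      (∑ e, v e = 0) → (adjM (RGraph G)).mulVec v = μ • v →
      μ = 1 ∨ μ = -d1 ∨ ∃ σ : ℝ, -(k:ℝ) ≤ σ ∧ σ < k ∧ μ = k - d1 + σ := by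
    intro v μ hv hsum heig
    have h1 : (adjM ((G.lineGraph)ᶜ.lineGraph)).mulVec v = (-1 - μ) • v :=
      eig_compl hsum heig
    by_cases hθ : (-1 - μ : ℝ) = -2
    · left; linarith
    · obtain ⟨x, hx0, hxsum, hxeig⟩ := line_eig _ hregQ hv hsum h1 hθ
      have h2 : (adjM G.lineGraph).mulVec x = (-1 - (-1 - μ + 2 - d1)) • x :=
        eig_compl hxsum hxeig
      by_cases hη : (-1 - (-1 - μ + 2 - d1) : ℝ) = -2
      · right; left; linarith
      · obtain ⟨z, hz0, hzsum, hzeig⟩ := line_eig G hregG hx0 hxsum h2 hη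
        have hb := eig_abs_le hregG hz0 hzeig
        rw [abs_le] at hb
        refine Or.inr (Or.inr ⟨-1 - (-1 - μ + 2 - d1) + 2 - (k:ℝ), hb.1, ?_, by ring⟩)
        rcases lt_or_eq_of_le hb.2 with h | h
        · exact h
        · exfalso
          have hz : (adjM G).mulVec z = ((k:ℝ)) • z := by rw [← h]; exact hzeig
          exact top_eig_orth_false hconn hregG hz0 hzsum hz
  have hNE : Nonempty ↑((G.lineGraph)ᶜ).edgeSet := by
    rw [← Fintype.card_pos_iff]
    have h0 : (0:ℝ) < (Fintype.card ↑((G.lineGraph)ᶜ).edgeSet : ℝ) := by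
      rw [← hM_def]; linarith
    exact_mod_cast h0
  have hkey : 2*(k:ℝ) - d1 ≤ D := by
    have hm12k : 2*(k:ℝ) + 1 ≤ m := by linarith
    nlinarith [mul_nonneg (by linarith : (0:ℝ) ≤ m) (by linarith : (0:ℝ) ≤ m - 1 - 2*(k:ℝ))]
  have hconnR : (RGraph G).Connected := by
    refine connected_of_no_top hregR ?_
    intro v hv hsum heig
    rcases spec_cases v D hv hsum heig with h | h | ⟨σ, h1, h2, h3⟩
    · linarith
    · linarith
    · linarith
  obtain ⟨e₀⟩ := hNE
  have hcast : (((RGraph G).degree e₀ : ℕ) : ℝ) = D := by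
    rw [degree_cast]; exact hregR e₀
  have hregNat : (RGraph G).IsRegularOfDegree ((RGraph G).degree e₀) :=
    regular_of_regR (regR_congr hregR hcast.symm)
  refine ⟨(RGraph G).degree e₀, hconnR, hregNat, ?_⟩
  intro μ hEig habs
  rw [isEigval_iff] at hEig
  obtain ⟨v, hv, heig⟩ := hEig
  rw [hcast] at habs
  have hμD : μ ≠ D := fun hc => habs (by rw [hc, abs_of_nonneg (by linarith : (0:ℝ) ≤ D)])
  have hsum := eig_orth hregR heig hμD
  have hsq : μ^2 ≤ 4*(D-1) := by
    rcases spec_cases v μ hv hsum heig with h | h | ⟨σ, h1, h2, h3⟩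
    · rw [h]
      nlinarith [mul_nonneg (by linarith : (0:ℝ) ≤ d1 - 2) (by linarith : (0:ℝ) ≤ m - 5)]
    · rw [h]
      nlinarith [mul_nonneg (by linarith : (0:ℝ) ≤ d1) (by linarith : (0:ℝ) ≤ m + 2*(k:ℝ) - 9)]
    · rw [h3]
      nlinarith [mul_nonneg (by linarith : (0:ℝ) ≤ (k:ℝ) - σ) (by linarith : (0:ℝ) ≤ σ + k),
        mul_nonneg (by linarith : (0:ℝ) ≤ 2*m - 5*(k:ℝ)) (by linarith : (0:ℝ) ≤ (k:ℝ) - 2),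
        sq_nonneg ((k:ℝ)-2), sq_nonneg (2*m - 5*(k:ℝ)),
        mul_nonneg (by linarith : (0:ℝ) ≤ 2*m-5*(k:ℝ)) (by linarith : (0:ℝ) ≤ 9*(k:ℝ)-8),
        mul_nonneg (by linarith : (0:ℝ) ≤ d1) (by linarith : (0:ℝ) ≤ m + 2*(k:ℝ) - 9)]
  rw [hcast]
  have h2D : 2 * Real.sqrt (D - 1) = Real.sqrt (4*(D-1)) := by
    rw [show (4:ℝ)*(D-1) = 2^2*(D-1) by ring,
      Real.sqrt_mul (by norm_num : (0:ℝ) ≤ 2^2), Real.sqrt_sq (by norm_num : (0:ℝ) ≤ 2)]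
  rw [← Real.sqrt_sq_eq_abs, h2D]
  exact Real.sqrt_le_sqrt hsq
end

section
/- If G is a connected k-regular graph on n ≥ 5 vertices with k ≥ 2, then every eigenvalue λ of R(G) := L(L(G)^c)^c other than the degree d = (1/8)(nk-8)(nk-4k+2) + 1 satisfies |λ| ≤ nk/2 - 2k + 1. -/
open SimpleGraph Polynomial

/-!
Write `H = L(G)ᶜ`, so that `R(G) = L(H)ᶜ`; `H` is `r`-regular with `r = nk/2 - 2k + 1`.
An eigenvector `x` of `R(G)` whose eigenvalue `μ` is not the degree is orthogonal to the all-ones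
vector, hence an eigenvector of `L(H)` for `-1 - μ`. With `B` the vertex–edge incidence matrix
of a graph `Γ`, `BᵀB = 2I + A(L(Γ))` shows that line graphs have no eigenvalue below `-2`, so
`μ ≤ 1`.
If `-1 - μ ≠ -2`, then `Bx ≠ 0`, and `BBᵀ = rI + A(H)` makes `Bx` an eigenvector of `H` for
`1 - μ - r`, again orthogonal to the all-ones vector; so it is an eigenvector of `Hᶜ = L(G)` for
`μ + r - 2 ≥ -2`, that is `μ ≥ -r`.
-/

open Matrix Finset

namespace SimpleGraph

variable {T : Type*} [Fintype T]

lemma adjM_eq_adjMatrix (Γ : SimpleGraph T) [DecidableRel Γ.Adj] : adjM Γ = Γ.adjMatrix ℝ := by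
  unfold adjM
  congr!

lemma adjM_mulVec_one (Γ : SimpleGraph T) : adjM Γ *ᵥ 1 = fun u => (Γ.degree u : ℝ) := by
  classical
  ext u
  rw [adjM_eq_adjMatrix]
  convert adjMatrix_mulVec_const_apply (G := Γ) (a := (1 : ℝ)) (v := u) using 1
  · rfl
  · rw [mul_one]
    congr!

lemma adjM_compl_mulVec_of_sum_eq_zero (Γ : SimpleGraph T) {x : T → ℝ} (hx : ∑ u, x u = 0) :
    adjM Γᶜ *ᵥ x = -x - adjM Γ *ᵥ x := by
  classical
  have hJx : of (1 : T → T → ℝ) *ᵥ x = 0 := by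
    ext u
    simp [mulVec, dotProduct, hx]
  rw [eq_sub_iff_add_eq, ← add_mulVec, add_comm, adjM_eq_adjMatrix, adjM_eq_adjMatrix,
    isCompl_compl.adjMatrix_add_adjMatrix_eq_adjMatrix_completeGraph (α := ℝ),
    adjMatrix_completeGraph_eq_of_one_sub_one, sub_mulVec, hJx, one_mulVec, zero_sub]

lemma sum_eq_zero_of_adjM_mulVec_eq_smul {Γ : SimpleGraph T} {d : ℕ} (hreg : Γ.IsRegularOfDegree d)
    {x : T → ℝ} {μ : ℝ} (h : adjM Γ *ᵥ x = μ • x) (hμ : μ ≠ d) : ∑ u, x u = 0 := by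
  have hrow : 1 ᵥ* adjM Γ = (d : ℝ) • 1 := by
    classical
    rw [adjM_eq_adjMatrix, ← transpose_adjMatrix, vecMul_transpose, ← adjM_eq_adjMatrix,
      adjM_mulVec_one]
    ext v
    simp [hreg v]
  have key : μ * (1 ⬝ᵥ x) = d * (1 ⬝ᵥ x) := calc
    μ * (1 ⬝ᵥ x) = 1 ⬝ᵥ (adjM Γ *ᵥ x) := by rw [h, dotProduct_smul, smul_eq_mul]
    _ = (1 ᵥ* adjM Γ) ⬝ᵥ x := dotProduct_mulVec ..
    _ = d * (1 ⬝ᵥ x) := by rw [hrow, smul_dotProduct, smul_eq_mul]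
  rw [← one_dotProduct]
  exact (mul_eq_mul_right_iff.mp key).resolve_left hμ

section Incidence

variable [DecidableEq T]

def edgeIncMatrix (Γ : SimpleGraph T) : Matrix T Γ.edgeSet ℝ :=
  of fun u e => if u ∈ (e : Sym2 T) then 1 else 0

lemma _root_.Sym2.card_filter_mem_and_mem {e f : Sym2 T} (he : ¬e.IsDiag) :
    #{u | u ∈ e ∧ u ∈ f} = if e = f then 2 else if ∃ u, u ∈ e ∧ u ∈ f then 1 else 0 := by
  split_ifs with hef hex
  · subst hef
    simp only [and_self, ← Sym2.card_toFinset_of_not_isDiag e he]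
    congr 1
    ext u
    simp
  · refine le_antisymm (card_le_one.mpr ?_) (card_pos.mpr ?_)
    · intro u hu v hv
      by_contra huv
      simp only [mem_filter, mem_univ, true_and] at hu hv
      exact hef (((Sym2.mem_and_mem_iff huv).mp ⟨hu.1, hv.1⟩).trans
        ((Sym2.mem_and_mem_iff huv).mp ⟨hu.2, hv.2⟩).symm)
    · obtain ⟨u, hu⟩ := hex
      exact ⟨u, by simpa using hu⟩
  · simpa using hex

variable (Γ : SimpleGraph T)

lemma one_vecMul_edgeIncMatrix : 1 ᵥ* Γ.edgeIncMatrix = 2 := by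
  ext e
  have he : ¬(e : Sym2 T).IsDiag := Γ.not_isDiag_of_mem_edgeSet e.2
  have h2 := Sym2.card_filter_mem_and_mem (f := e.1) he
  simp only [and_self, ite_true] at h2
  simp [vecMul, dotProduct, edgeIncMatrix, sum_boole, h2]

variable [Fintype Γ.edgeSet]

lemma transpose_mul_edgeIncMatrix :
    Γ.edgeIncMatrixᵀ * Γ.edgeIncMatrix = (2 : ℝ) • 1 + adjM Γ.lineGraph := by
  classical
  ext e f
  have he : ¬(e : Sym2 T).IsDiag := Γ.not_isDiag_of_mem_edgeSet e.2
  simp only [mul_apply, transpose_apply, edgeIncMatrix, of_apply, ite_zero_mul_ite_zero, mul_one,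
    sum_boole, Sym2.card_filter_mem_and_mem he, Matrix.add_apply, Matrix.smul_apply, Matrix.one_apply,
    adjM_eq_adjMatrix, adjMatrix_apply, lineGraph_adj_iff_exists, ← Subtype.ext_iff]
  split_ifs <;> simp_all

lemma edgeIncMatrix_mul_transpose :
    Γ.edgeIncMatrix * Γ.edgeIncMatrixᵀ = diagonal (fun u => (Γ.degree u : ℝ)) + adjM Γ := by
  classical
  ext u v
  have hsum : (Γ.edgeIncMatrix * Γ.edgeIncMatrixᵀ) u v =
      (Γ.incMatrix ℝ * (Γ.incMatrix ℝ)ᵀ) u v := by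
    simp only [mul_apply, transpose_apply, edgeIncMatrix, of_apply]
    rw [sum_set_coe (f := fun e : Sym2 T => (if u ∈ e then (1 : ℝ) else 0) * if v ∈ e then 1 else 0),
      ← Fintype.sum_ite_mem]
    refine sum_congr rfl fun e _ => ?_
    by_cases he : e ∈ Γ.edgeSet <;> simp [incMatrix_apply', incidenceSet, he]
  rw [hsum, incMatrix_mul_transpose, adjM_eq_adjMatrix]
  by_cases huv : u = v
  · subst huv
    simp
  · simp [huv, adjMatrix_apply]

lemma edgeIncMatrix_mulVec_one : Γ.edgeIncMatrix *ᵥ 1 = fun u => (Γ.degree u : ℝ) := by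
  classical
  ext u
  have hdiag := congrFun (congrFun (Γ.edgeIncMatrix_mul_transpose) u) u
  simp only [mul_apply, transpose_apply, edgeIncMatrix, of_apply, ite_zero_mul_ite_zero, and_self,
    mul_one] at hdiag
  simpa [mulVec, dotProduct, edgeIncMatrix, adjM_eq_adjMatrix] using hdiag

end Incidence

variable {Γ : SimpleGraph T} [Fintype Γ.edgeSet]

lemma IsRegularOfDegree.card_mul_eq_two_mul_card_edgeSet {r : ℕ} (hreg : Γ.IsRegularOfDegree r) :
    Fintype.card T * r = 2 * Fintype.card Γ.edgeSet := by
  classical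
  have key := dotProduct_mulVec (1 : T → ℝ) Γ.edgeIncMatrix 1
  simp only [edgeIncMatrix_mulVec_one, hreg _, one_vecMul_edgeIncMatrix, one_dotProduct,
    dotProduct_one, Pi.ofNat_apply, sum_const, card_univ, nsmul_eq_mul] at key
  exact_mod_cast key.trans (mul_comm _ _)

lemma IsRegularOfDegree.degree_lineGraph_add_two {r : ℕ} (hreg : Γ.IsRegularOfDegree r)
    (e : Γ.edgeSet) : Γ.lineGraph.degree e + 2 = 2 * r := by
  classical
  have hrow : Γ.edgeIncMatrix *ᵥ 1 = (r : ℝ) • 1 := by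
    ext u
    simp [edgeIncMatrix_mulVec_one, hreg u]
  have key := congrFun (congrArg (· *ᵥ (1 : Γ.edgeSet → ℝ)) Γ.transpose_mul_edgeIncMatrix) e
  simp only [← mulVec_mulVec, hrow, mulVec_smul, mulVec_transpose, one_vecMul_edgeIncMatrix,
    add_mulVec, smul_mulVec, one_mulVec, adjM_mulVec_one, Pi.smul_apply, Pi.ofNat_apply,
    smul_eq_mul, Pi.add_apply, mul_one] at key
  exact_mod_cast (by linarith : (Γ.lineGraph.degree e : ℝ) + 2 = 2 * r)

lemma IsRegularOfDegree.compl_lineGraph {r : ℕ} (hreg : Γ.IsRegularOfDegree r) :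
    (Γ.lineGraph)ᶜ.IsRegularOfDegree (Fintype.card Γ.edgeSet + 1 - 2 * r) := by
  classical
  intro e
  have hlt : Γ.lineGraph.degree e < Fintype.card Γ.edgeSet := by
    convert Γ.lineGraph.degree_lt_card_verts e
  have := hreg.degree_lineGraph_add_two e
  rw [degree_compl]
  omega

lemma IsRegularOfDegree.cast_degree_compl_lineGraph {r : ℕ} (hreg : Γ.IsRegularOfDegree r)
    (hT : 4 ≤ Fintype.card T) :
    ((Fintype.card Γ.edgeSet + 1 - 2 * r : ℕ) : ℝ) = Fintype.card T * r / 2 - 2 * r + 1 := by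
  have hq := hreg.card_mul_eq_two_mul_card_edgeSet
  have h4r : 4 * r ≤ Fintype.card T * r := Nat.mul_le_mul_right r hT
  have hqR : (Fintype.card T : ℝ) * r = 2 * Fintype.card Γ.edgeSet := by exact_mod_cast hq
  rw [Nat.cast_sub (by omega)]
  push_cast
  linarith

lemma neg_two_le_of_adjM_lineGraph_mulVec_eq_smul {x : Γ.edgeSet → ℝ} (hx : x ≠ 0) {c : ℝ}
    (h : adjM Γ.lineGraph *ᵥ x = c • x) : -2 ≤ c := by
  classical
  set y := Γ.edgeIncMatrix *ᵥ x
  have hyy : y ⬝ᵥ y = (2 + c) * (x ⬝ᵥ x) := calc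
    y ⬝ᵥ y = x ⬝ᵥ (Γ.edgeIncMatrixᵀ *ᵥ y) := by rw [dotProduct_mulVec x, vecMul_transpose]
    _ = (2 + c) * (x ⬝ᵥ x) := by
      rw [mulVec_mulVec, transpose_mul_edgeIncMatrix, add_mulVec, smul_mulVec, one_mulVec, h,
        ← add_smul, dotProduct_smul, smul_eq_mul]
  have hy : 0 ≤ y ⬝ᵥ y := by simpa using dotProduct_self_star_nonneg y
  have hx' : 0 < x ⬝ᵥ x := by simpa using dotProduct_self_star_pos_iff.mpr hx
  nlinarith

lemma exists_adjM_mulVec_eq_smul_of_adjM_lineGraph_mulVec_eq_smul {r : ℕ}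
    (hreg : Γ.IsRegularOfDegree r) {x : Γ.edgeSet → ℝ} (hx : x ≠ 0) (hsum : ∑ e, x e = 0)
    {c : ℝ} (hc : c ≠ -2) (h : adjM Γ.lineGraph *ᵥ x = c • x) :
    ∃ w : T → ℝ, w ≠ 0 ∧ ∑ u, w u = 0 ∧ adjM Γ *ᵥ w = (c + 2 - r) • w := by
  classical
  set w := Γ.edgeIncMatrix *ᵥ x
  have hBt : Γ.edgeIncMatrixᵀ *ᵥ w = (2 + c) • x := by
    rw [mulVec_mulVec, transpose_mul_edgeIncMatrix, add_mulVec, smul_mulVec, one_mulVec, h,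
      ← add_smul]
  refine ⟨w, ?_, ?_, ?_⟩
  · intro hw
    rw [hw, mulVec_zero, eq_comm, smul_eq_zero] at hBt
    exact hBt.elim (fun h2 => hc (by linarith)) hx
  · rw [← one_dotProduct, dotProduct_mulVec, one_vecMul_edgeIncMatrix]
    simp [dotProduct, ← mul_sum, hsum]
  · have hBBt := congrArg (Γ.edgeIncMatrix *ᵥ ·) hBt
    have hdeg : diagonal (fun u => (Γ.degree u : ℝ)) *ᵥ w = (r : ℝ) • w := by
      ext u
      simp [mulVec_diagonal, hreg u]
    simp only [mulVec_mulVec, edgeIncMatrix_mul_transpose, add_mulVec, hdeg, mulVec_smul] at hBBt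
    linear_combination (norm := module) hBBt

end SimpleGraph

lemma mem_Icc_of_adjM_RGraph_mulVec_eq_smul {V : Type*} [Fintype V] (G : SimpleGraph V)
    [Fintype (G.lineGraph)ᶜ.edgeSet] {r : ℕ} (hreg : (G.lineGraph)ᶜ.IsRegularOfDegree r)
    {x : (G.lineGraph)ᶜ.edgeSet → ℝ} (hx : x ≠ 0) (hsum : ∑ e, x e = 0) {μ : ℝ}
    (h : adjM (RGraph G) *ᵥ x = μ • x) : μ ∈ Set.Icc (-(r : ℝ)) 1 := by
  have := Fintype.ofFinite G.edgeSet
  have hL : adjM (G.lineGraph)ᶜ.lineGraph *ᵥ x = (-1 - μ) • x := by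
    have := adjM_compl_mulVec_of_sum_eq_zero (G.lineGraph)ᶜ.lineGraph hsum
    rw [← RGraph, h] at this
    linear_combination (norm := module) this
  have hμ := neg_two_le_of_adjM_lineGraph_mulVec_eq_smul hx hL
  refine ⟨?_, by linarith⟩
  by_cases hc : -1 - μ = -2
  · have : (0 : ℝ) ≤ r := r.cast_nonneg
    linarith
  obtain ⟨w, hw0, hwsum, hw⟩ :=
    exists_adjM_mulVec_eq_smul_of_adjM_lineGraph_mulVec_eq_smul hreg hx hsum hc hL
  have hLG : adjM G.lineGraph *ᵥ w = (-1 - (-1 - μ + 2 - r)) • w := by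
    have := adjM_compl_mulVec_of_sum_eq_zero G.lineGraph hwsum
    rw [hw] at this
    linear_combination (norm := module) this
  linarith [neg_two_le_of_adjM_lineGraph_mulVec_eq_smul hw0 hLG]

theorem stmt16_general {V : Type*} [Fintype V] (G : SimpleGraph V) (k : ℕ)
    (hn : 5 ≤ Fintype.card V) (hk : 2 ≤ k)
    (hreg : G.IsRegularOfDegree k) :
    ∀ μ : ℝ, IsEigval (RGraph G) μ →
      μ ≠ ((Fintype.card V : ℝ) * k - 8) * ((Fintype.card V : ℝ) * k - 4 * k + 2) / 8 + 1 →
      |μ| ≤ (Fintype.card V : ℝ) * k / 2 - 2 * k + 1 := by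
  let := Fintype.ofFinite G.edgeSet
  let := Fintype.ofFinite (G.lineGraph)ᶜ.edgeSet
  rintro μ ⟨x, hx, h⟩ hμ
  have hm := hreg.card_mul_eq_two_mul_card_edgeSet
  have hH := hreg.compl_lineGraph
  have hs := hreg.cast_degree_compl_lineGraph (by omega)
  have hd := hH.cast_degree_compl_lineGraph (by nlinarith)
  have hmR : (Fintype.card G.edgeSet : ℝ) = Fintype.card V * k / 2 := by
    rw [eq_div_iff two_ne_zero]
    exact_mod_cast (hm.trans (mul_comm _ _)).symm
  rw [hs, hmR] at hd
  have hsum := sum_eq_zero_of_adjM_mulVec_eq_smul hH.compl_lineGraph h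
    (by rw [hd]; convert hμ using 1; ring)
  obtain ⟨hlo, hhi⟩ := mem_Icc_of_adjM_RGraph_mulVec_eq_smul G hH hx hsum h
  rw [hs] at hlo
  have h5k : (5 : ℝ) * k ≤ Fintype.card V * k := by gcongr; exact_mod_cast hn
  rw [abs_le]
  constructor <;> linarith

theorem stmt16 {V : Type*} [Fintype V] (G : SimpleGraph V) (k : ℕ)
    (hn : 5 ≤ Fintype.card V) (hk : 2 ≤ k) (hconn : G.Connected)
    (hreg : G.IsRegularOfDegree k) :
    ∀ μ : ℝ, IsEigval (RGraph G) μ →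
      μ ≠ ((Fintype.card V : ℝ) * k - 8) * ((Fintype.card V : ℝ) * k - 4 * k + 2) / 8 + 1 →
      |μ| ≤ (Fintype.card V : ℝ) * k / 2 - 2 * k + 1 :=
  stmt16_general G k hn hk hreg
end
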